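/- arXiv:1207.4425 — 12 statements merged into one kernel-verified Lean document; each statement's English description precedes it below -/
import Mathlib

section
/- Let f be a polynomial with rational coefficients in the four entries of a 2×2 matrix. If f vanishes at every 2×2 matrix with integer entries whose determinant is 1 or −1, then f vanishes at every 2×2 matrix with rational entries whose determinant is 1 or −1. (In other words, the Zariski closure of GL₂(ℤ) is the subvariety of GL₂ defined by (det g)² − 1 = 0.) -/
open MvPolynomial

private lemma eval_bind₁' {σ τ : Type*} (x : τ → ℚ) (h : σ → MvPolynomial τ ℚ)
    (φ : MvPolynomial σ ℚ) :
    eval x (bind₁ h φ) = eval (fun i => eval x (h i)) φ :=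
  eval₂Hom_bind₁ _ _ _ _

/-- A multivariate polynomial over `ℚ` vanishing at all integer points is zero. -/
private lemma int_points_zero : ∀ (n : ℕ) (q : MvPolynomial (Fin n) ℚ),
    (∀ t : Fin n → ℤ, eval (fun i => (t i : ℚ)) q = 0) → q = 0 := by
  intro n
  induction n with
  | zero =>
    intro q h
    obtain ⟨a, rfl⟩ := MvPolynomial.C_surjective (Fin 0) q
    have := h (fun i => 0)
    simpa using this
  | succ n ih =>
    intro q h
    have hcoeff : ∀ k, (finSuccEquiv ℚ n q).coeff k = 0 := by
      intro k
      apply ih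
      intro s
      have hpoly : Polynomial.map (eval (fun i => (s i : ℚ))) (finSuccEquiv ℚ n q) = 0 := by
        apply Polynomial.eq_zero_of_infinite_isRoot
        apply Set.Infinite.mono (s := Set.range (fun m : ℤ => (m : ℚ)))
        · rintro x ⟨m, rfl⟩
          have := h (Fin.cons m s)
          rw [show (fun i => ((Fin.cons m s : Fin (n+1) → ℤ) i : ℚ))
              = Fin.cons (m : ℚ) (fun i => (s i : ℚ)) from ?_] at this
          · rw [eval_eq_eval_mv_eval'] at this
            exact this
          · funext i
            refine Fin.cases ?_ ?_ i <;> simp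
        · exact Set.infinite_range_of_injective (fun a b hab => by exact_mod_cast hab)
      have := congrArg (fun p => Polynomial.coeff p k) hpoly
      simpa [Polynomial.coeff_map] using this
    have : finSuccEquiv ℚ n q = 0 := Polynomial.ext fun k => by simp [hcoeff k]
    have := (finSuccEquiv ℚ n).injective (by simpa using this)
    simpa using this

private def e12 {R : Type*} [CommRing R] (t : R) : Matrix (Fin 2) (Fin 2) R := !![1, t; 0, 1]
private def e21 {R : Type*} [CommRing R] (t : R) : Matrix (Fin 2) (Fin 2) R := !![1, 0; t, 1]

private def prodM {R : Type*} [CommRing R] (t : Fin 8 → R) : Matrix (Fin 2) (Fin 2) R :=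
  e21 (t 0) * e12 (t 1) * e21 (t 2) * e12 (t 3) * e21 (t 4) * e12 (t 5) * e21 (t 6) * e12 (t 7)

private lemma map_e12 {R S : Type*} [CommRing R] [CommRing S] (φ : R →+* S) (x : R) :
    (e12 x).map φ = e12 (φ x) := by
  ext i j
  fin_cases i <;> fin_cases j <;> simp [e12]

private lemma map_e21 {R S : Type*} [CommRing R] [CommRing S] (φ : R →+* S) (x : R) :
    (e21 x).map φ = e21 (φ x) := by
  ext i j
  fin_cases i <;> fin_cases j <;> simp [e21]

private lemma map_prodM {R S : Type*} [CommRing R] [CommRing S] (φ : R →+* S) (t : Fin 8 → R) :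
    φ.mapMatrix (prodM t) = prodM (fun i => φ (t i)) := by
  simp only [RingHom.mapMatrix_apply, prodM, Matrix.map_mul, map_e12, map_e21]

private lemma det_prodM {R : Type*} [CommRing R] (t : Fin 8 → R) : (prodM t).det = 1 := by
  unfold prodM
  simp only [Matrix.det_mul]
  simp [e12, e21, Matrix.det_fin_two_of]


private lemma prodM_eq₁ (a b c d : ℚ) (ha : a ≠ 0) (hdet : a * d - b * c = 1) :
    prodM ![c / a, a, -(1 / a), a - 1, 1, b / a - 1, 0, 0] = !![a, b; c, d] := by
  set t : Fin 8 → ℚ := ![c / a, a, -(1 / a), a - 1, 1, b / a - 1, 0, 0] with ht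
  have ht0 : t 0 = c / a := rfl
  have ht1 : t 1 = a := rfl
  have ht2 : t 2 = -(1 / a) := rfl
  have ht3 : t 3 = a - 1 := rfl
  have ht4 : t 4 = 1 := rfl
  have ht5 : t 5 = b / a - 1 := rfl
  have ht6 : t 6 = 0 := rfl
  have ht7 : t 7 = 0 := rfl
  ext i j
  fin_cases i <;> fin_cases j <;>
    simp [prodM, e12, e21, Matrix.mul_apply, Fin.sum_univ_two, ht0, ht1, ht2, ht3, ht4,
      ht5, ht6, ht7]
  all_goals field_simp
  all_goals (first
    | ring1
    | linear_combination hdet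
    | linear_combination -hdet
    | linear_combination a * hdet
    | linear_combination -(a * hdet)
    | linear_combination a^2 * hdet
    | linear_combination -(a^2 * hdet))

private lemma prodM_eq₂ (b c d : ℚ) (hb : b ≠ 0) (hdet : - b * c = 1) :
    prodM ![d / b, -b, 1 / b, -b - 1, 1, -2, 1, -1] = !![0, b; c, d] := by
  set t : Fin 8 → ℚ := ![d / b, -b, 1 / b, -b - 1, 1, -2, 1, -1] with ht
  have ht0 : t 0 = d / b := rfl
  have ht1 : t 1 = -b := rfl
  have ht2 : t 2 = 1 / b := rfl
  have ht3 : t 3 = -b - 1 := rfl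
  have ht4 : t 4 = 1 := rfl
  have ht5 : t 5 = -2 := rfl
  have ht6 : t 6 = 1 := rfl
  have ht7 : t 7 = -1 := rfl
  ext i j
  fin_cases i <;> fin_cases j <;>
    simp [prodM, e12, e21, Matrix.mul_apply, Fin.sum_univ_two, ht0, ht1, ht2, ht3, ht4,
      ht5, ht6, ht7]
  all_goals field_simp
  all_goals (first
    | ring1
    | linear_combination hdet
    | linear_combination -hdet
    | linear_combination b * hdet
    | linear_combination -(b * hdet)
    | linear_combination b^2 * hdet
    | linear_combination -(b^2 * hdet)
    | linear_combination d * hdet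
    | linear_combination -(d * hdet)
    | linear_combination b * d * hdet
    | linear_combination -(b * d * hdet))

/-- The key case: `f` vanishing on `GL₂(ℤ)` vanishes on `SL₂(ℚ)`. -/
private lemma key (f : MvPolynomial (Fin 2 × Fin 2) ℚ)
    (hf : ∀ g : Matrix (Fin 2) (Fin 2) ℤ, g.det = 1 ∨ g.det = -1 →
      MvPolynomial.eval (fun p : Fin 2 × Fin 2 => (g p.1 p.2 : ℚ)) f = 0)
    (g : Matrix (Fin 2) (Fin 2) ℚ) (hg : g.det = 1) :
    MvPolynomial.eval (fun p : Fin 2 × Fin 2 => g p.1 p.2) f = 0 := by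
  set q : MvPolynomial (Fin 8) ℚ :=
    bind₁ (fun ij : Fin 2 × Fin 2 => prodM (X : Fin 8 → MvPolynomial (Fin 8) ℚ) ij.1 ij.2) f
    with hq_def
  -- for any rational parameters, evaluating q gives f at the product matrix
  have heval : ∀ t : Fin 8 → ℚ,
      eval t q = eval (fun ij : Fin 2 × Fin 2 => prodM t ij.1 ij.2) f := by
    intro t
    rw [hq_def, eval_bind₁']
    have hfun : (fun ij : Fin 2 × Fin 2 => eval t (prodM (X : Fin 8 → MvPolynomial (Fin 8) ℚ) ij.1 ij.2))
        = fun ij : Fin 2 × Fin 2 => prodM t ij.1 ij.2 := by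
      funext ij
      have := map_prodM (eval t : MvPolynomial (Fin 8) ℚ →+* ℚ) (X : Fin 8 → MvPolynomial (Fin 8) ℚ)
      have h2 := congrFun (congrFun (congrArg (fun M => (M : Matrix (Fin 2) (Fin 2) ℚ)) this) ij.1) ij.2
      simpa [RingHom.mapMatrix_apply, Matrix.map_apply] using h2
    rw [hfun]
  -- q vanishes at integer points
  have hq : q = 0 := by
    apply int_points_zero
    intro t
    rw [heval]
    have hcast : (fun ij : Fin 2 × Fin 2 => prodM (fun i => ((t i : ℚ))) ij.1 ij.2)
        = fun ij : Fin 2 × Fin 2 => ((prodM t ij.1 ij.2 : ℤ) : ℚ) := by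
      funext ij
      have := map_prodM (Int.castRingHom ℚ) t
      have h2 := congrFun (congrFun (congrArg (fun M => (M : Matrix (Fin 2) (Fin 2) ℚ)) this) ij.1) ij.2
      simpa [RingHom.mapMatrix_apply, Matrix.map_apply] using h2.symm
    rw [hcast]
    exact hf (prodM t) (Or.inl (det_prodM t))
  -- find rational parameters hitting g
  have hdet : g 0 0 * g 1 1 - g 0 1 * g 1 0 = 1 := by
    rw [← Matrix.det_fin_two]; exact hg
  by_cases ha : g 0 0 ≠ 0
  · set t : Fin 8 → ℚ :=
      ![g 1 0 / g 0 0, g 0 0, -(1 / g 0 0), g 0 0 - 1, 1, g 0 1 / g 0 0 - 1, 0, 0] with ht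
    have hmat : prodM t = g := by
      rw [ht, prodM_eq₁ (g 0 0) (g 0 1) (g 1 0) (g 1 1) ha hdet]
      exact (Matrix.eta_fin_two g).symm
    have h0 := heval t
    rw [hq, hmat] at h0
    simpa using h0.symm
  · push_neg at ha
    have hb : g 0 1 ≠ 0 := by
      intro hb
      rw [ha, hb] at hdet; simp at hdet
    have hdet' : -(g 0 1) * g 1 0 = 1 := by rw [ha] at hdet; linarith [hdet]
    set t : Fin 8 → ℚ :=
      ![g 1 1 / g 0 1, -(g 0 1), 1 / g 0 1, -(g 0 1) - 1, 1, -2, 1, -1] with ht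
    have hmat : prodM t = g := by
      rw [ht, prodM_eq₂ (g 0 1) (g 1 0) (g 1 1) hb hdet']
      conv_rhs => rw [Matrix.eta_fin_two g]
      rw [ha]
    have h0 := heval t
    rw [hq, hmat] at h0
    simpa using h0.symm

/-- If a polynomial `f ∈ ℚ[x₁₁, x₁₂, x₂₁, x₂₂]` vanishes at every `2×2` integer
matrix of determinant `1` or `-1`, then it vanishes at every `2×2` rational
matrix of determinant `1` or `-1`.  (The Zariski closure of `GL₂(ℤ)` is the
subvariety of `GL₂` defined by `(det g)² − 1 = 0`.) -/
theorem zariski_closure_GL2_int (f : MvPolynomial (Fin 2 × Fin 2) ℚ)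
    (hf : ∀ g : Matrix (Fin 2) (Fin 2) ℤ, g.det = 1 ∨ g.det = -1 →
      MvPolynomial.eval (fun p : Fin 2 × Fin 2 => (g p.1 p.2 : ℚ)) f = 0) :
    ∀ g : Matrix (Fin 2) (Fin 2) ℚ, g.det = 1 ∨ g.det = -1 →
      MvPolynomial.eval (fun p : Fin 2 × Fin 2 => g p.1 p.2) f = 0 := by
  intro g hg
  rcases hg with hg | hg
  · exact key f hf g hg
  · -- flip the sign of the second row
    set f' : MvPolynomial (Fin 2 × Fin 2) ℚ :=
      bind₁ (fun ij : Fin 2 × Fin 2 => if ij.1 = 0 then X ij else - X ij) f with hf'_def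
    have hf' : ∀ h : Matrix (Fin 2) (Fin 2) ℤ, h.det = 1 ∨ h.det = -1 →
        MvPolynomial.eval (fun p : Fin 2 × Fin 2 => (h p.1 p.2 : ℚ)) f' = 0 := by
      intro h hh
      set h' : Matrix (Fin 2) (Fin 2) ℤ :=
        Matrix.of (fun i j => if i = 0 then h i j else - h i j) with hh'
      have hdet' : h'.det = - h.det := by
        rw [Matrix.det_fin_two, Matrix.det_fin_two]
        simp [hh', Matrix.of_apply]
        ring
      have : MvPolynomial.eval (fun p : Fin 2 × Fin 2 => (h' p.1 p.2 : ℚ)) f = 0 := by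
        apply hf
        rcases hh with h1 | h1
        · right; rw [hdet', h1]
        · left; rw [hdet', h1]; ring
      rw [hf'_def, eval_bind₁']
      have hfun : (fun i : Fin 2 × Fin 2 =>
          eval (fun p : Fin 2 × Fin 2 => (h p.1 p.2 : ℚ)) (if i.1 = 0 then X i else - X i))
          = fun p : Fin 2 × Fin 2 => ((h' p.1 p.2 : ℤ) : ℚ) := by
        funext ij
        by_cases hij : ij.1 = 0 <;> simp [hij, hh', Matrix.of_apply]
      rw [hfun]
      exact this
    set g' : Matrix (Fin 2) (Fin 2) ℚ :=
      Matrix.of (fun i j => if i = 0 then g i j else - g i j) with hg'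
    have hdetg' : g'.det = 1 := by
      rw [Matrix.det_fin_two]
      rw [Matrix.det_fin_two] at hg
      simp [hg', Matrix.of_apply]
      linarith [hg]
    have h0 := key f' hf' g' hdetg'
    rw [hf'_def, eval_bind₁'] at h0
    have hfun : (fun i : Fin 2 × Fin 2 =>
        eval (fun p : Fin 2 × Fin 2 => g' p.1 p.2) (if i.1 = 0 then X i else - X i))
        = fun p : Fin 2 × Fin 2 => g p.1 p.2 := by
      funext ij
      by_cases hij : ij.1 = 0 <;> simp [hij, hg', Matrix.of_apply]
    rw [hfun] at h0
    exact h0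
end

section
/- Let p be a prime with p ≡ 1 (mod 8). Then the reduction map GL₂(ℤ[1/2]) → GL₂(ℤ/pℤ), induced by the unique ring homomorphism ℤ[1/2] → ℤ/pℤ (which exists since 2 is invertible mod p) applied entrywise, is not surjective. -/
/-!
A unit of `ℤ[1/2]` is `±2ᵏ/2ⁿ`. When `p ≡ 1 (mod 8)`, both `-1` and `2` are squares mod `p`,
so every unit of `ℤ[1/2]` reduces to a square. Determinants of reduced matrices are therefore
squares, whereas `det : GL₂(𝔽ₚ) → 𝔽ₚˣ` hits the non-squares.
-/

open Matrix IsLocalization.Away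

theorem IsLocalization.Away.exists_coe_units_eq_mul_invSelf_pow {R S : Type*} [CommRing R]
    [IsDomain R] [CommRing S] [Algebra R S] {x : R} (hx : Prime x) [IsLocalization.Away x S]
    (u : Sˣ) : ∃ (v : Rˣ) (k n : ℕ), (u : S) = algebraMap R S (x ^ k * v) * invSelf x ^ n := by
  obtain ⟨n, a, ha⟩ := surj x (u : S)
  obtain ⟨m, b, hb⟩ := surj x (u⁻¹ : Sˣ).val
  have hinj : Function.Injective (algebraMap R S) :=
    IsLocalization.injective S (powers_le_nonZeroDivisors_of_noZeroDivisors hx.ne_zero)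
  have hab : a * b = x ^ (n + m) := hinj <| by
    rw [map_mul, ← ha, ← hb, mul_mul_mul_comm, Units.mul_inv, one_mul, map_pow, pow_add]
  obtain ⟨k, -, hk⟩ := (dvd_prime_pow hx _).1 ⟨b, hab.symm⟩
  obtain ⟨v, hv⟩ := hk.symm
  refine ⟨v, k, n, ?_⟩
  calc (u : S) = u * (algebraMap R S x * invSelf x) ^ n := by rw [mul_invSelf, one_pow, mul_one]
    _ = algebraMap R S (x ^ k * v) * invSelf x ^ n := by
      rw [mul_pow, ← mul_assoc, ha, hv]

theorem IsSquare.of_mul_eq_one {M : Type*} [CommMonoid M] {y z : M} (hy : IsSquare y)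
    (h : y * z = 1) : IsSquare z := by
  obtain ⟨r, rfl⟩ := hy
  refine ⟨z * r, ?_⟩
  calc z = z * (r * r * z) := by rw [h, mul_one]
    _ = z * r * (z * r) := by ac_rfl

theorem isSquare_map_units_localizationAway_two {R : Type*} [CommRing R]
    (φ : Localization.Away (2 : ℤ) →+* R) (h2 : IsSquare (2 : R)) (hneg : IsSquare (-1 : R))
    (u : (Localization.Away (2 : ℤ))ˣ) : IsSquare (φ u) := by
  have hinv : IsSquare (φ (invSelf (2 : ℤ))) := by
    refine IsSquare.of_mul_eq_one (y := φ (algebraMap ℤ _ 2)) (by rwa [map_ofNat, map_ofNat]) ?_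
    rw [← map_mul, mul_invSelf, map_one]
  obtain ⟨v, k, n, hu⟩ := exists_coe_units_eq_mul_invSelf_pow Int.prime_two u
  rw [hu, map_mul, map_pow, ← RingHom.comp_apply, eq_intCast]
  push_cast
  refine IsSquare.mul (IsSquare.mul (h2.pow k) ?_) (hinv.pow n)
  rcases Int.units_eq_one_or v with rfl | rfl
  · simp
  · simpa using hneg

/-- Let `p` be a prime with `p ≡ 1 (mod 8)`.  Then the reduction map
`GL₂(ℤ[1/2]) → GL₂(ℤ/pℤ)` induced (entrywise) by the unique ring homomorphism
`ℤ[1/2] → ℤ/pℤ` is not surjective.  (Since the ring homomorphism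
`ℤ[1/2] → ℤ/pℤ` is unique, we quantify over all such ring homomorphisms;
one exists because `2` is invertible mod `p`.) -/
theorem gl2_half_integers_reduction_not_surjective (p : ℕ) (hp : p.Prime)
    (h8 : p % 8 = 1) (φ : Localization.Away (2 : ℤ) →+* ZMod p) :
    ¬ Function.Surjective
        (Matrix.GeneralLinearGroup.map φ :
          GL (Fin 2) (Localization.Away (2 : ℤ)) →* GL (Fin 2) (ZMod p)) := by
  have : Fact p.Prime := ⟨hp⟩
  have hp2 : p ≠ 2 := by omega
  obtain ⟨a, ha⟩ :=
    FiniteField.exists_nonsquare (by rwa [ZMod.ringChar_zmod_n] : ringChar (ZMod p) ≠ 2)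
  have ha0 : a ≠ 0 := by rintro rfl; exact ha IsSquare.zero
  intro hsurj
  obtain ⟨g, hg⟩ := (GeneralLinearGroup.det_surjective.comp hsurj) (Units.mk0 a ha0)
  rw [Function.comp_apply, GeneralLinearGroup.map_det] at hg
  apply ha
  have hdet : φ g.det = a := congrArg Units.val hg
  rw [← hdet]
  exact isSquare_map_units_localizationAway_two φ
    ((ZMod.exists_sq_eq_two_iff hp2).2 (Or.inl h8)) (ZMod.exists_sq_eq_neg_one_iff.2 (by omega)) _
end

section
/- The subgroup Γ₁ of SL₂(ℤ) generated by the matrices [[1,2],[0,1]] and [[1,0],[2,1]] contains the principal congruence subgroup SL₂(ℤ,4), i.e. the kernel of the reduction map SL₂(ℤ) → SL₂(ℤ/4ℤ). -/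
/-!
Euclidean descent. Call `A = [[a, b], [c, d]] ∈ SL₂(ℤ)` admissible if `a ≡ 1 mod 4` and `b`, `c`
are even; every element of `SL₂(ℤ,4)` is. Left multiplication by `T^{2k} = [[1, 2k], [0, 1]]`
replaces `a` by `a + 2kc`, and by `L^{2k} = [[1, 0], [2k, 1]]` replaces `c` by `c + 2ka`; both
keep `A` admissible and are invertible inside `Γ₁`. As `a` is odd and `c` even, one of them strictly
decreases `|a| + |c|` while `c ≠ 0`. When `c = 0`, `ad = 1` and `a ≡ 1 mod 4` force `A = T^b`.
-/

open Matrix.SpecialLinearGroup MatrixGroups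

/-- A residue class modulo `2y` whose parity differs from that of `y` avoids `±|y|`, so its
balanced representative has absolute value `< |y|`. -/
theorem Int.exists_natAbs_add_two_mul_lt {x y : ℤ} (hy : y ≠ 0) (hxy : x % 2 ≠ y % 2) :
    ∃ k : ℤ, (x + 2 * k * y).natAbs < y.natAbs := by
  have h2y : 2 * y ≠ 0 := by omega
  have hr0 := Int.emod_nonneg x h2y
  have hr1 := Int.emod_lt x h2y
  have hpar : x % (2 * y) % 2 = x % 2 := Int.emod_emod_of_dvd x (dvd_mul_right 2 y)
  suffices ∃ j : ℤ, (x % (2 * y) + 2 * j * y).natAbs < y.natAbs by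
    obtain ⟨j, hj⟩ := this
    refine ⟨-(x / (2 * y)) + j, ?_⟩
    rwa [show x + 2 * (-(x / (2 * y)) + j) * y = x % (2 * y) + 2 * j * y by
      rw [Int.emod_def]; ring]
  by_cases hsmall : x % (2 * y) < y.natAbs
  · exact ⟨0, by omega⟩
  rcases lt_or_gt_of_ne hy with hneg | hpos
  · exact ⟨1, by omega⟩
  · exact ⟨-1, by omega⟩

namespace ModularGroup

def L : SL(2, ℤ) :=
  ⟨!![1, 0; 1, 1], by simp [Matrix.det_fin_two_of]⟩

theorem L_eq_S_mul_T_inv_mul_S_inv : L = S * T⁻¹ * S⁻¹ := by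
  decide

theorem coe_L_zpow (n : ℤ) : (L ^ n).1 = !![1, 0; n, 1] := by
  rw [L_eq_S_mul_T_inv_mul_S_inv, conj_zpow, coe_mul, coe_mul, ← zpow_neg_one, ← zpow_mul,
    coe_T_zpow, coe_inv]
  simp [Matrix.adjugate_fin_two]

theorem T_zpow_mul_apply_zero_zero (n : ℤ) (A : SL(2, ℤ)) :
    (T ^ n * A) 0 0 = A 0 0 + n * A 1 0 := by
  simp [coe_T_zpow, Matrix.mul_apply, Fin.sum_univ_two]

theorem T_zpow_mul_apply_zero_one (n : ℤ) (A : SL(2, ℤ)) :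
    (T ^ n * A) 0 1 = A 0 1 + n * A 1 1 := by
  simp [coe_T_zpow, Matrix.mul_apply, Fin.sum_univ_two]

theorem T_zpow_mul_apply_one_zero (n : ℤ) (A : SL(2, ℤ)) : (T ^ n * A) 1 0 = A 1 0 := by
  simp

theorem L_zpow_mul_apply_zero (n : ℤ) (A : SL(2, ℤ)) (j : Fin 2) : (L ^ n * A) 0 j = A 0 j := by
  simp [coe_L_zpow, Matrix.mul_apply, Fin.sum_univ_two]

theorem L_zpow_mul_apply_one_zero (n : ℤ) (A : SL(2, ℤ)) :
    (L ^ n * A) 1 0 = A 1 0 + n * A 0 0 := by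
  simp [coe_L_zpow, Matrix.mul_apply, Fin.sum_univ_two]
  ring

/-- The group `Γ₁`, named after Sanov, who showed it is free on its two generators. -/
def sanovSubgroup : Subgroup SL(2, ℤ) :=
  Subgroup.closure {g | (g : Matrix (Fin 2) (Fin 2) ℤ) = !![1, 2; 0, 1] ∨
    (g : Matrix (Fin 2) (Fin 2) ℤ) = !![1, 0; 2, 1]}

theorem T_zpow_two_mul_mem_sanovSubgroup (k : ℤ) : T ^ (2 * k) ∈ sanovSubgroup := by
  have hT : T ^ (2 : ℤ) ∈ sanovSubgroup := Subgroup.subset_closure (Or.inl (coe_T_zpow 2))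
  simpa only [zpow_mul] using zpow_mem hT k

theorem L_zpow_two_mul_mem_sanovSubgroup (k : ℤ) : L ^ (2 * k) ∈ sanovSubgroup := by
  have hL : L ^ (2 : ℤ) ∈ sanovSubgroup := Subgroup.subset_closure (Or.inr (coe_L_zpow 2))
  simpa only [zpow_mul] using zpow_mem hL k

theorem mem_sanovSubgroup_of_apply_one_zero_eq_zero {A : SL(2, ℤ)} (hc : A 1 0 = 0)
    (ha : 4 ∣ A 0 0 - 1) (hb : 2 ∣ A 0 1) : A ∈ sanovSubgroup := by
  have hdet : A 0 0 * A 1 1 = 1 := by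
    have h := A.det_coe
    rwa [Matrix.det_fin_two, hc, mul_zero, sub_zero] at h
  obtain ⟨ha1, hd1⟩ : A 0 0 = 1 ∧ A 1 1 = 1 := by
    rcases Int.eq_one_or_neg_one_of_mul_eq_one' hdet with h | h
    · exact h
    · omega
  obtain ⟨m, hm⟩ := hb
  have hA : A = T ^ (2 * m) := by
    ext i j
    fin_cases i <;> fin_cases j <;> simp [coe_T_zpow, ha1, hd1, hc, hm]
  exact hA ▸ T_zpow_two_mul_mem_sanovSubgroup m

theorem mem_sanovSubgroup_of_dvd (A : SL(2, ℤ)) (ha : 4 ∣ A 0 0 - 1) (hb : 2 ∣ A 0 1)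
    (hc : 2 ∣ A 1 0) : A ∈ sanovSubgroup := by
  induction hn : (A 0 0).natAbs + (A 1 0).natAbs using Nat.strong_induction_on generalizing A
    with | _ n ih => ?_
  rcases eq_or_ne (A 1 0) 0 with hc0 | hc0
  · exact mem_sanovSubgroup_of_apply_one_zero_eq_zero hc0 ha hb
  rcases lt_or_gt_of_ne (show (A 1 0).natAbs ≠ (A 0 0).natAbs by omega) with hlt | hgt
  · obtain ⟨k, hk⟩ := Int.exists_natAbs_add_two_mul_lt hc0 (x := A 0 0) (by omega)
    refine (Subgroup.mul_mem_cancel_left _ (T_zpow_two_mul_mem_sanovSubgroup k)).mp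
      (ih _ ?_ (T ^ (2 * k) * A) ?_ ?_ ?_ rfl) <;>
      simp only [T_zpow_mul_apply_zero_zero, T_zpow_mul_apply_zero_one,
        T_zpow_mul_apply_one_zero]
    · omega
    · have := mul_dvd_mul (dvd_mul_right 2 k) hc
      omega
    · have := (dvd_mul_right 2 k).mul_right (A 1 1)
      omega
    · exact hc
  · obtain ⟨k, hk⟩ := Int.exists_natAbs_add_two_mul_lt (x := A 1 0) (by omega : A 0 0 ≠ 0)
      (by omega)
    refine (Subgroup.mul_mem_cancel_left _ (L_zpow_two_mul_mem_sanovSubgroup k)).mp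
      (ih _ ?_ (L ^ (2 * k) * A) ?_ ?_ ?_ rfl) <;>
      simp only [L_zpow_mul_apply_zero, L_zpow_mul_apply_one_zero]
    · omega
    · exact ha
    · exact hb
    · have := (dvd_mul_right 2 k).mul_right (A 0 0)
      omega

end ModularGroup

/-- The subgroup `Γ₁` of `SL₂(ℤ)` generated by `[[1,2],[0,1]]` and
`[[1,0],[2,1]]` contains the principal congruence subgroup `SL₂(ℤ,4)`,
the kernel of reduction modulo `4`. -/
theorem congruence_subgroup_four_le_Gamma_one :
    (Matrix.SpecialLinearGroup.map (Int.castRingHom (ZMod 4)) :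
        Matrix.SpecialLinearGroup (Fin 2) ℤ →*
          Matrix.SpecialLinearGroup (Fin 2) (ZMod 4)).ker ≤
      Subgroup.closure
        {g : Matrix.SpecialLinearGroup (Fin 2) ℤ |
          (g : Matrix (Fin 2) (Fin 2) ℤ) = !![1, 2; 0, 1] ∨
          (g : Matrix (Fin 2) (Fin 2) ℤ) = !![1, 0; 2, 1]} := by
  intro A hA
  obtain ⟨ha, hb, hc, -⟩ := CongruenceSubgroup.Gamma_mem.mp
    (show A ∈ CongruenceSubgroup.Gamma 4 from hA)
  have ha4 : 4 ∣ A 0 0 - 1 := (ZMod.intCast_zmod_eq_zero_iff_dvd _ 4).mp (by simp [ha])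
  rw [ZMod.intCast_zmod_eq_zero_iff_dvd] at hb hc
  exact ModularGroup.mem_sanovSubgroup_of_dvd A ha4 (by omega) (by omega)
end

section
/- The subgroup Γ₁ of SL₂(ℤ) generated by the matrices [[1,2],[0,1]] and [[1,0],[2,1]] has index exactly 12 in SL₂(ℤ). -/
/-!
The group `Γ₁ = ⟨T², (Tᵀ)²⟩` is exactly the preimage, under reduction `SL(2, ℤ) → SL(2, ℤ/4)`,
of the four-element group `{[[1, b], [c, 1]] : b, c ∈ {0, 2}}`. One inclusion is checked on
generators. For the other, a matrix `[[a, b], [c, d]]` with `a ≡ 1 (mod 4)` and `b, c` even is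
reduced by a Euclidean descent on `|c|`: left multiplication by a power of `T²` replaces `a` by a
representative of `a mod 2c` of absolute value below `|c|`, then a power of `(Tᵀ)²` does the same
for `c mod 2a`. Since `a` stays odd and `c` even, no remainder equals `±|c|`, so `|c|` strictly
drops; at `c = 0` the matrix is a power of `T²`. Reduction mod 4 is onto, as every element of
`SL(2, ℤ/4)` is the image of some `S^a T^b (Tᵀ)^c`, and `|SL(2, ℤ/4)| = 48`, so the index is
`48 / 4 = 12`.
-/

open Matrix.SpecialLinearGroup MatrixGroups
open ModularGroup (S T coe_T coe_T_zpow)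

local notation "π₄" => Matrix.SpecialLinearGroup.map (n := Fin 2) (Int.castRingHom (ZMod 4))

namespace SanovSubgroup

theorem coe_T_transpose_zpow (n : ℤ) : (Tᵀ ^ n).1 = !![1, 0; n, 1] := by
  induction n with
  | zero => rw [zpow_zero, coe_one, Matrix.one_fin_two]
  | succ n h =>
    rw [zpow_add_one, coe_mul, h, coe_transpose, coe_T]
    ext i j; fin_cases i <;> fin_cases j <;> simp [Matrix.mul_apply]
  | pred n h =>
    rw [zpow_sub_one, coe_mul, h, coe_inv, coe_transpose, coe_T]
    ext i j
    fin_cases i <;> fin_cases j <;>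
      simp [Matrix.mul_apply, Matrix.adjugate_fin_two, sub_eq_add_neg]

theorem exists_natAbs_add_two_mul_lt {x y : ℤ} (hy : y ≠ 0) (hxy : Odd (x + y)) :
    ∃ j : ℤ, (x + 2 * j * y).natAbs < y.natAbs := by
  set s : ℤ := (y.natAbs : ℤ)
  have h2y : 2 * y ≠ 0 := by omega
  have hdiv := Int.mul_ediv_add_emod (x + s) (2 * y)
  have hr0 := Int.emod_nonneg (x + s) h2y
  have hr1 := Int.emod_lt (x + s) h2y
  set q := (x + s) / (2 * y)
  set r := (x + s) % (2 * y)
  -- `x - 2qy = r - |y|` with `0 ≤ r < 2|y|`, and `r ≠ 0` by parity.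
  refine ⟨-q, ?_⟩
  obtain ⟨p, hp⟩ : ∃ p, r = x + s - 2 * p := ⟨y * q, by linarith⟩
  rw [show x + 2 * -q * y = r - s by linear_combination -hdiv]
  rw [Int.odd_iff] at hxy
  omega

def modFour : Subgroup SL(2, ZMod 4) where
  carrier := {x | x 0 0 = 1 ∧ x 1 1 = 1 ∧ 2 * x 0 1 = 0 ∧ 2 * x 1 0 = 0}
  one_mem' := by simp
  mul_mem' := by
    rintro x y ⟨hx₀₀, hx₁₁, hx₀₁, hx₁₀⟩ ⟨hy₀₀, hy₁₁, hy₀₁, hy₁₀⟩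
    have mul_eq_zero : ∀ b c : ZMod 4, 2 * b = 0 → 2 * c = 0 → b * c = 0 := by decide
    have h₁ := mul_eq_zero _ _ hx₀₁ hy₁₀
    have h₂ := mul_eq_zero _ _ hy₀₁ hx₁₀
    refine ⟨?_, ?_, ?_, ?_⟩ <;>
      simp only [coe_mul, Matrix.mul_apply, Fin.sum_univ_two, hx₀₀, hx₁₁, hy₀₀, hy₁₁, one_mul,
        mul_one]
    · linear_combination h₁
    · linear_combination h₂
    · linear_combination hy₀₁ + hx₀₁
    · linear_combination hx₁₀ + hy₁₀
  inv_mem' := by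
    rintro x ⟨h₀₀, h₁₁, h₀₁, h₁₀⟩
    simp [Matrix.adjugate_fin_two, h₀₀, h₁₁, h₀₁, h₁₀]

instance : DecidablePred (· ∈ modFour) := fun x =>
  decidable_of_iff (x 0 0 = 1 ∧ x 1 1 = 1 ∧ 2 * x 0 1 = 0 ∧ 2 * x 1 0 = 0) Iff.rfl

theorem map_mem_modFour_iff {g : SL(2, ℤ)} :
    π₄ g ∈ modFour ↔ g 0 0 ≡ 1 [ZMOD 4] ∧ g 1 1 ≡ 1 [ZMOD 4] ∧ 2 ∣ g 0 1 ∧ 2 ∣ g 1 0 := by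
  have two_mul_eq_zero (b : ℤ) : 2 * (b : ZMod 4) = 0 ↔ 2 ∣ b := by
    rw [← Int.cast_ofNat, ← Int.cast_mul, ZMod.intCast_zmod_eq_zero_iff_dvd]
    omega
  have eq_one (a : ℤ) : (a : ZMod 4) = 1 ↔ a ≡ 1 [ZMOD 4] := by
    rw [← Int.cast_one, ZMod.intCast_eq_intCast_iff]; rfl
  simp only [modFour, Subgroup.mem_mk, Submonoid.mem_mk, Subsemigroup.mem_mk, Set.mem_ofPred_eq,
    SL_reduction_mod_hom_val, eq_one, two_mul_eq_zero]

theorem closure_le_comap_modFour : Subgroup.closure {T ^ 2, Tᵀ ^ 2} ≤ modFour.comap π₄ := by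
  rw [Subgroup.closure_le]
  rintro g (rfl | rfl) <;> exact map_mem_modFour_iff.2 (by decide)

theorem mem_closure_of_lower_left_eq_zero {g : SL(2, ℤ)} (hc : g 1 0 = 0) (hg : π₄ g ∈ modFour) :
    g ∈ Subgroup.closure {T ^ 2, Tᵀ ^ 2} := by
  obtain ⟨ha, -, ⟨m, hm⟩, -⟩ := map_mem_modFour_iff.1 hg
  have had : g 0 0 * g 1 1 = 1 := by
    have := g.det_coe
    rwa [Matrix.det_fin_two, hc, mul_zero, sub_zero] at this
  obtain ⟨ha₁, hd₁⟩ : g 0 0 = 1 ∧ g 1 1 = 1 := by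
    rcases Int.eq_one_or_neg_one_of_mul_eq_one' had with h | ⟨ha', -⟩
    · exact h
    · rw [ha'] at ha; contradiction
  have hgT : g = (T ^ 2) ^ m := by
    rw [← zpow_natCast, ← zpow_mul]
    ext i j
    fin_cases i <;> fin_cases j <;> simp [coe_T_zpow, ha₁, hd₁, hc, hm]
  exact hgT ▸ Subgroup.zpow_mem _ (Subgroup.subset_closure (Set.mem_insert _ _)) m

theorem exists_mem_closure_natAbs_lower_left_lt {g : SL(2, ℤ)} (hc : g 1 0 ≠ 0)
    (hg : π₄ g ∈ modFour) :
    ∃ γ ∈ Subgroup.closure {T ^ 2, Tᵀ ^ 2}, ((γ * g) 1 0).natAbs < (g 1 0).natAbs := by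
  obtain ⟨ha, -, -, hc₂⟩ := map_mem_modFour_iff.1 hg
  have hc_even : Even (g 1 0) := even_iff_two_dvd.2 hc₂
  have hac : Odd (g 0 0 + g 1 0) := by
    rw [Int.odd_iff]
    rw [Int.ModEq] at ha
    omega
  obtain ⟨j, hj⟩ := exists_natAbs_add_two_mul_lt hc hac
  set a := g 0 0 + 2 * j * g 1 0
  have hca : Odd (g 1 0 + a) := by
    rw [show g 1 0 + a = g 0 0 + g 1 0 + 2 * (j * g 1 0) by ring]
    exact hac.add_even (even_two_mul _)
  have ha₀ : a ≠ 0 := by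
    rintro h
    rw [h, add_zero] at hca
    exact Int.not_odd_iff_even.2 hc_even hca
  obtain ⟨k, hk⟩ := exists_natAbs_add_two_mul_lt ha₀ hca
  refine ⟨(Tᵀ ^ 2) ^ k * (T ^ 2) ^ j, ?_, ?_⟩
  · exact Subgroup.mul_mem _ (Subgroup.zpow_mem _ (Subgroup.subset_closure (by simp)) k)
      (Subgroup.zpow_mem _ (Subgroup.subset_closure (by simp)) j)
  · have : ((Tᵀ ^ 2) ^ k * (T ^ 2) ^ j * g) 1 0 = g 1 0 + 2 * k * a := by
      simp only [← zpow_natCast, ← zpow_mul, coe_mul, coe_T_zpow, coe_T_transpose_zpow,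
        Matrix.mul_apply, Fin.sum_univ_two, Matrix.of_apply, Matrix.cons_val', Matrix.cons_val_zero,
        Matrix.cons_val_fin_one, Matrix.cons_val_one, Nat.cast_ofNat, mul_one, mul_zero, add_zero]
      ring
    omega

theorem mem_closure_of_map_mem_modFour (g : SL(2, ℤ)) (hg : π₄ g ∈ modFour) :
    g ∈ Subgroup.closure {T ^ 2, Tᵀ ^ 2} := by
  by_cases hc : g 1 0 = 0
  · exact mem_closure_of_lower_left_eq_zero hc hg
  obtain ⟨γ, hγ, hlt⟩ := exists_mem_closure_natAbs_lower_left_lt hc hg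
  have hγg := mem_closure_of_map_mem_modFour (γ * g) (mul_mem (closure_le_comap_modFour hγ) hg)
  exact (Subgroup.mul_mem_cancel_left _ hγ).1 hγg
termination_by (g 1 0).natAbs

theorem closure_eq_comap_modFour : Subgroup.closure {T ^ 2, Tᵀ ^ 2} = modFour.comap π₄ :=
  le_antisymm closure_le_comap_modFour mem_closure_of_map_mem_modFour

theorem exists_S_pow_mul_T_pow_mul_T_transpose_pow_eq (x : SL(2, ZMod 4)) :
    ∃ a b c : Fin 4, π₄ S ^ (a : ℕ) * π₄ T ^ (b : ℕ) * π₄ Tᵀ ^ (c : ℕ) = x := by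
  revert x
  decide

theorem map_zmod_four_surjective : Function.Surjective π₄ := by
  intro x
  obtain ⟨a, b, c, h⟩ := exists_S_pow_mul_T_pow_mul_T_transpose_pow_eq x
  exact ⟨S ^ (a : ℕ) * T ^ (b : ℕ) * Tᵀ ^ (c : ℕ), by simpa only [map_mul, map_pow] using h⟩

theorem index_modFour : modFour.index = 12 := by
  have hG : Nat.card SL(2, ZMod 4) = 48 := by rw [Nat.card_eq_fintype_card]; decide
  have hK : Nat.card modFour = 4 := by rw [Nat.card_eq_fintype_card]; decide
  have := modFour.card_mul_index
  rw [hG, hK] at this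
  omega

end SanovSubgroup

/-- The subgroup `Γ₁` of `SL₂(ℤ)` generated by `[[1,2],[0,1]]` and
`[[1,0],[2,1]]` has index exactly `12` in `SL₂(ℤ)`. -/
theorem Gamma_one_index_eq_twelve :
    (Subgroup.closure
        {g : Matrix.SpecialLinearGroup (Fin 2) ℤ |
          (g : Matrix (Fin 2) (Fin 2) ℤ) = !![1, 2; 0, 1] ∨
          (g : Matrix (Fin 2) (Fin 2) ℤ) = !![1, 0; 2, 1]}).index = 12 := by
  have hgens : {g : Matrix.SpecialLinearGroup (Fin 2) ℤ |
      (g : Matrix (Fin 2) (Fin 2) ℤ) = !![1, 2; 0, 1] ∨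
      (g : Matrix (Fin 2) (Fin 2) ℤ) = !![1, 0; 2, 1]} = {T ^ 2, Tᵀ ^ 2} := by
    have hT : ((T ^ 2 : SL(2, ℤ)) : Matrix (Fin 2) (Fin 2) ℤ) = !![1, 2; 0, 1] := by decide
    have hTt : ((Tᵀ ^ 2 : SL(2, ℤ)) : Matrix (Fin 2) (Fin 2) ℤ) = !![1, 0; 2, 1] := by decide
    ext g
    simp only [Set.mem_ofPred_eq, Set.mem_insert_iff, Set.mem_singleton_iff, ← hT, ← hTt]
    exact or_congr Subtype.coe_inj Subtype.coe_inj
  rw [hgens, SanovSubgroup.closure_eq_comap_modFour,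
    Subgroup.index_comap_of_surjective _ SanovSubgroup.map_zmod_four_surjective,
    SanovSubgroup.index_modFour]
end

section
/- For every integer ℓ ≥ 1, the subgroup Γ_{ℓ+1} has infinite index in Γ_ℓ, where Γ_ℓ denotes the subgroup of SL₂(ℤ) generated by the matrices [[1,2^ℓ],[0,1]] and [[1,0],[2^ℓ,1]]. -/
/-!
For `|m| ≥ 2` the matrices `A = [[1,m],[0,1]]` and `B = [[1,0],[m,1]]` play ping-pong on the
cones `|y| < |x|` and `|x| < |y|` of the plane, so they freely generate a free group `F(A, B)`.
For `m = 2^ℓ` with `ℓ ≥ 1` this is `Γ_ℓ`, and `Γ_{ℓ+1}` is the subgroup generated by `A²` and `B²`.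
Sending `A` and `B` to two reflections of the infinite dihedral group kills both squares,
while `AB` goes to a rotation of infinite order; so `Γ_{ℓ+1}` lies in a kernel of infinite index.
-/

/-- For `ℓ ≥ 0`, `Γ ℓ` is the subgroup of `SL₂(ℤ)` generated by the matrices
`[[1,2^ℓ],[0,1]]` and `[[1,0],[2^ℓ,1]]`. -/
def GammaSL2 (ℓ : ℕ) : Subgroup (Matrix.SpecialLinearGroup (Fin 2) ℤ) :=
  Subgroup.closure
    {g : Matrix.SpecialLinearGroup (Fin 2) ℤ |
      (g : Matrix (Fin 2) (Fin 2) ℤ) = !![1, 2 ^ ℓ; 0, 1] ∨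
      (g : Matrix (Fin 2) (Fin 2) ℤ) = !![1, 0; 2 ^ ℓ, 1]}

open Function Matrix
open scoped Pointwise MatrixGroups

theorem FreeGroup.injective_lift_of_zpow_ping_pong {ι G α : Type*} [Nontrivial ι] [Group G]
    [MulAction G α] (a : ι → G) (X : ι → Set α) (hX : ∀ i, (X i).Nonempty)
    (hXdisj : Pairwise (Disjoint on X))
    (hpp : Pairwise fun i j => ∀ k : ℤ, k ≠ 0 → a i ^ k • X j ⊆ X i) :
    Injective (FreeGroup.lift a) := by
  -- `FreeGroup ι` is the free product of copies of `ℤ`, to which Mathlib's ping-pong lemma applies.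
  let toCoprod : FreeGroup ι →* Monoid.CoprodI fun _ : ι => Multiplicative ℤ :=
    FreeGroup.lift fun i => Monoid.CoprodI.of (i := i) (Multiplicative.ofAdd 1)
  let ofCoprod : (Monoid.CoprodI fun _ : ι => Multiplicative ℤ) →* FreeGroup ι :=
    Monoid.CoprodI.lift fun i => zpowersHom _ (FreeGroup.of i)
  have h_left_inv : LeftInverse ofCoprod toCoprod := by
    refine DFunLike.congr_fun (f := ofCoprod.comp toCoprod) (g := MonoidHom.id _) ?_
    ext i
    simp [toCoprod, ofCoprod]
  have h_factor : FreeGroup.lift a =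
      (Monoid.CoprodI.lift fun i => zpowersHom G (a i)).comp toCoprod := by
    ext i
    simp [toCoprod]
  have hcard : ∃ i, 3 ≤ Cardinal.mk (Multiplicative ℤ) :=
    ⟨Classical.arbitrary ι, Cardinal.natCast_lt_aleph0.le.trans (Cardinal.aleph0_le_mk _)⟩
  rw [h_factor, MonoidHom.coe_comp]
  refine Injective.comp ?_ h_left_inv.injective
  refine Monoid.CoprodI.lift_injective_of_ping_pong _ (Or.inr hcard) X hX hXdisj ?_
  intro i j hij h h_ne
  exact hpp hij _ (by simpa using h_ne)

theorem FreeGroup.index_closure_range_of_sq_eq_zero (α : Type*) [Nontrivial α] :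
    (Subgroup.closure (Set.range fun x : α => FreeGroup.of x ^ 2)).index = 0 := by
  classical
  obtain ⟨a, b, hab⟩ := exists_pair_ne α
  let ψ : FreeGroup α →* DihedralGroup 0 :=
    FreeGroup.lift fun x => DihedralGroup.sr (if x = a then 0 else 1)
  have h_le_ker : Subgroup.closure (Set.range fun x : α => FreeGroup.of x ^ 2) ≤ ψ.ker := by
    rw [Subgroup.closure_le]
    rintro _ ⟨x, rfl⟩
    simp [ψ, sq]
  have h_rot : ψ (FreeGroup.of a * FreeGroup.of b) = DihedralGroup.r 1 := by
    simp [ψ, hab.symm]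
  have h_range : (ψ.range : Set (DihedralGroup 0)).Infinite := by
    refine (infinite_zpowers.2 ?_).mono (Subgroup.zpowers_le.2 ⟨_, h_rot⟩)
    rw [← orderOf_eq_zero_iff, DihedralGroup.orderOf_r_one]
  have : Infinite ψ.range := h_range.to_subtype
  have h_ker : ψ.ker.index = 0 := by rw [Subgroup.index_ker, Nat.card_eq_zero_of_infinite]
  exact zero_dvd_iff.mp (h_ker ▸ Subgroup.index_dvd_of_le h_le_ker)

section Unipotent

variable {R : Type*} [CommRing R]

def unipotentUpper : AddChar R SL(2, R) where
  toFun a := ⟨!![1, a; 0, 1], by simp⟩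
  map_zero_eq_one' := by ext i j; fin_cases i <;> fin_cases j <;> rfl
  map_add_eq_mul' a b := Subtype.ext <| by
    change !![1, a + b; 0, 1] = !![1, a; 0, 1] * !![1, b; 0, 1]
    simp [add_comm]

def unipotentLower : AddChar R SL(2, R) where
  toFun a := ⟨!![1, 0; a, 1], by simp⟩
  map_zero_eq_one' := by ext i j; fin_cases i <;> fin_cases j <;> rfl
  map_add_eq_mul' a b := Subtype.ext <| by
    change !![1, 0; a + b, 1] = !![1, 0; a, 1] * !![1, 0; b, 1]
    simp

lemma unipotentUpper_smul (a : R) (v : Fin 2 → R) :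
    unipotentUpper a • v = ![v 0 + a * v 1, v 1] := by
  change !![1, a; 0, 1] *ᵥ v = _
  ext i
  fin_cases i <;> simp [mulVec, dotProduct]

lemma unipotentLower_smul (a : R) (v : Fin 2 → R) :
    unipotentLower a • v = ![v 0, v 1 + a * v 0] := by
  change !![1, 0; a, 1] *ᵥ v = _
  ext i
  fin_cases i <;> simp [mulVec, dotProduct, add_comm]

def unipotentPair (m : R) (i : Bool) : SL(2, R) :=
  cond i (unipotentUpper m) (unipotentLower m)

lemma unipotentPair_sq (m : R) (i : Bool) :
    unipotentPair m i ^ 2 = unipotentPair (2 * m) i := by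
  cases i <;> simp [unipotentPair, ← AddChar.map_nsmul_eq_pow, two_mul]

end Unipotent

section PingPong

variable {R : Type*} [CommRing R] [LinearOrder R] [IsStrictOrderedRing R]

lemma abs_lt_abs_add_intCast_mul_mul {m x y : R} {k : ℤ} (hm : 2 ≤ |m|) (hk : k ≠ 0)
    (h : |x| < |y|) : |y| < |x + k * m * y| := by
  have hk : (1 : R) ≤ |(k : R)| := by exact_mod_cast Int.one_le_abs hk
  have h_big : 2 * |y| ≤ |k * m * y| := by
    rw [abs_mul, abs_mul]
    calc 2 * |y| = 1 * 2 * |y| := by ring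
      _ ≤ |(k : R)| * |m| * |y| := by gcongr
  have h_tri := abs_sub_abs_le_abs_add (k * m * y) x
  rw [add_comm x]
  linarith

theorem injective_lift_unipotentPair {m : R} (hm : 2 ≤ |m|) :
    Injective (FreeGroup.lift (unipotentPair m)) := by
  refine FreeGroup.injective_lift_of_zpow_ping_pong _
    (fun i => cond i {v : Fin 2 → R | |v 1| < |v 0|} {v | |v 0| < |v 1|}) ?_ ?_ ?_
  · rintro (_ | _)
    exacts [⟨![0, 1], by simp⟩, ⟨![1, 0], by simp⟩]
  · rintro (_ | _) (_ | _) hij <;> simp only [ne_eq, not_true_eq_false] at hij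
    all_goals
      refine Set.disjoint_left.2 fun v h h' => ?_
      simp only [cond_true, cond_false, Set.mem_ofPred_eq] at h h'
      exact lt_asymm h h'
  · rintro (_ | _) (_ | _) hij k hk <;> simp only [ne_eq, not_true_eq_false] at hij
    all_goals
      rintro _ ⟨v, hv, rfl⟩
      simp only [unipotentPair, cond_true, cond_false, Set.mem_ofPred_eq,
        ← AddChar.map_zsmul_eq_zpow, zsmul_eq_mul, unipotentUpper_smul,
        unipotentLower_smul] at hv ⊢
      simpa using abs_lt_abs_add_intCast_mul_mul hm hk hv

end PingPong

lemma GammaSL2_eq_closure_range (ℓ : ℕ) :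
    GammaSL2 ℓ = Subgroup.closure (Set.range (unipotentPair (2 ^ ℓ : ℤ))) := by
  rw [GammaSL2]
  congr 1
  ext g
  constructor
  · rintro (h | h)
    exacts [⟨true, Subtype.ext h.symm⟩, ⟨false, Subtype.ext h.symm⟩]
  · rintro ⟨_ | _, rfl⟩
    exacts [Or.inr rfl, Or.inl rfl]

/-- Infinite relative index is encoded as `relIndex = 0`. -/
theorem Gamma_succ_infinite_index_in_Gamma (ℓ : ℕ) (hℓ : 1 ≤ ℓ) :
    (GammaSL2 (ℓ + 1)).relIndex (GammaSL2 ℓ) = 0 := by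
  have hm : (2 : ℤ) ≤ |2 ^ ℓ| := by
    rw [abs_of_pos (by positivity)]
    exact le_self_pow₀ one_le_two (by omega)
  set L := FreeGroup.lift (unipotentPair (2 ^ ℓ : ℤ))
  have hΓ : GammaSL2 ℓ = (⊤ : Subgroup (FreeGroup Bool)).map L := by
    rw [← MonoidHom.range_eq_map, FreeGroup.range_lift_eq_closure, GammaSL2_eq_closure_range]
  have hΓ_succ : GammaSL2 (ℓ + 1) =
      (Subgroup.closure (Set.range fun i => FreeGroup.of i ^ 2)).map L := by
    rw [MonoidHom.map_closure, ← Set.range_comp, GammaSL2_eq_closure_range]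
    congr 2
    funext i
    rw [Function.comp_apply, map_pow, FreeGroup.lift_apply_of, unipotentPair_sq, pow_succ']
  rw [hΓ, hΓ_succ,
    Subgroup.relIndex_map_map_of_injective _ _ (injective_lift_unipotentPair hm),
    Subgroup.relIndex_top_right]
  exact FreeGroup.index_closure_range_of_sq_eq_zero Bool
end

section
/- For every integer m ≥ 3, the subgroup Δ_m of SL₂(ℤ) generated by the matrices [[1,m],[0,1]] and [[1,0],[m,1]] has infinite index in SL₂(ℤ). -/
/-!
`Δ_m` is the image of the free product `ℤ ∗ ℤ` under the map sending the two factors to the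
transvections `n ↦ [[1, m n], [0, 1]]` and `n ↦ [[1, 0], [m n, 1]]`. These play ping-pong on
`ℤ²` with the sets `|y| < |x|` and `|x| < |y|`; since `m ≥ 3`, a single nontrivial letter
already pushes `(1, 1)` into one of them, so every nontrivial element of the free product moves
`(1, 1)`. Hence `Δ_m` meets the stabilizer of `(1, 1)`, which is infinite, only in `1`, and a
subgroup meeting an infinite subgroup trivially has infinite index.
-/

open Matrix MatrixGroups
open scoped Pointwise

namespace Monoid.CoprodI

variable {ι : Type*} {H : ι → Type*} [∀ i, Group (H i)] {G : Type*} [Group G]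
  (f : ∀ i, H i →* G) {α : Type*} [MulAction G α] {X : ι → Set α} {x₀ : α}
  (hpp : Pairwise fun i j => ∀ h : H i, h ≠ 1 → f i h • X j ⊆ X i)
  (h₀ : ∀ i (h : H i), h ≠ 1 → f i h • x₀ ∈ X i)
include hpp h₀

theorem lift_neWord_prod_smul_mem {i j : ι} (w : NeWord H i j) :
    lift f w.prod • x₀ ∈ X i := by
  induction w with
  | singleton h hne => simpa using h₀ _ h hne
  | @append i j k l w₁ hne w₂ _ ih₂ =>
    rw [NeWord.append_prod, map_mul, mul_smul]
    exact lift_word_ping_pong f X hpp w₁ hne (Set.smul_mem_smul_set ih₂)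

theorem lift_smul_ne_self (hx₀ : ∀ i, x₀ ∉ X i) {c : CoprodI H} (hc : c ≠ 1) :
    lift f c • x₀ ≠ x₀ := by
  classical
  have hw : Word.equiv c ≠ Word.empty := fun h =>
    hc (by rw [← Word.equiv.symm_apply_apply c, h]; rfl)
  obtain ⟨i, j, w, hw'⟩ := NeWord.of_word _ hw
  have hcw : c = w.prod := by
    rw [NeWord.prod, hw']
    exact (Word.equiv.symm_apply_apply c).symm
  intro hfix
  exact hx₀ i (hfix ▸ hcw ▸ lift_neWord_prod_smul_mem f hpp h₀ w)

end Monoid.CoprodI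

theorem Subgroup.index_eq_zero_of_disjoint {G : Type*} [Group G] {H K : Subgroup G}
    [Infinite K] (h : Disjoint H K) : H.index = 0 := by
  apply index_eq_zero_of_relIndex_eq_zero (K := K)
  rw [← inf_relIndex_right, h.eq_bot, relIndex_bot_left, Nat.card_eq_zero_of_infinite]

theorem Int.abs_lt_abs_add_mul {x y c : ℤ} (hxy : |x| ≤ |y|) (hy : y ≠ 0) (hc : 3 ≤ |c|) :
    |y| < |x + c * y| := by
  have hy₁ : 1 ≤ |y| := Int.one_le_abs hy
  have hcy : 3 * |y| ≤ |c * y| := by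
    rw [abs_mul]
    exact mul_le_mul_of_nonneg_right hc (abs_nonneg y)
  have := abs_sub_abs_le_abs_sub (c * y) (-x)
  rw [sub_neg_eq_add, add_comm, abs_neg] at this
  linarith

theorem Fin.self_ne_rev_two (i : Fin 2) : i ≠ i.rev := by
  fin_cases i <;> decide

theorem Fin.eq_rev_of_ne_two {i j : Fin 2} (h : i ≠ j) : j = i.rev := by
  fin_cases i <;> fin_cases j <;> simp_all

namespace Matrix.SpecialLinearGroup

variable {ι F : Type*} [DecidableEq ι] [Fintype ι] [CommRing F] {i j : ι}

lemma transvection_smul (hij : i ≠ j) (b : F) (v : ι → F) :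
    transvection hij b • v = v + Pi.single i (b * v j) := by
  simp [SpecialLinearGroup.smul_def, transvection_coe, add_mulVec, single_mulVec_eq,
    ← Pi.single_smul]

def transvectionHom (hij : i ≠ j) : Multiplicative F →* SpecialLinearGroup ι F where
  toFun b := transvection hij b.toAdd
  map_one' := transvection_coeff_zero hij
  map_mul' _ _ := Subtype.ext (Matrix.transvection_mul_transvection_same i j hij _ _).symm

end Matrix.SpecialLinearGroup

namespace ModularGroup

open SpecialLinearGroup Monoid

def deltaGen (m : ℤ) (i : Fin 2) : Multiplicative ℤ →* SL(2, ℤ) :=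
  (transvectionHom (Fin.self_ne_rev_two i)).comp (AddMonoidHom.mulLeft m).toMultiplicative

lemma deltaGen_apply (m : ℤ) (i : Fin 2) (n : Multiplicative ℤ) :
    deltaGen m i n = transvection (Fin.self_ne_rev_two i) (m * n.toAdd) :=
  rfl

def pingPongSet (i : Fin 2) : Set (Fin 2 → ℤ) := {v | |v i.rev| < |v i|}

lemma deltaGen_smul_mem_pingPongSet {m : ℤ} (hm : 3 ≤ m) {i : Fin 2} {n : Multiplicative ℤ}
    (hn : n ≠ 1) {v : Fin 2 → ℤ} (hv : |v i| ≤ |v i.rev|) (hv₀ : v i.rev ≠ 0) :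
    deltaGen m i n • v ∈ pingPongSet i := by
  have hmn : 3 ≤ |m * n.toAdd| := by
    rw [abs_mul, abs_of_nonneg (by omega : 0 ≤ m)]
    nlinarith [Int.one_le_abs (show n.toAdd ≠ 0 from hn)]
  simpa [deltaGen_apply, pingPongSet, transvection_smul, Pi.single_apply,
    (Fin.self_ne_rev_two i).symm] using Int.abs_lt_abs_add_mul hv hv₀ hmn

lemma disjoint_range_lift_deltaGen_stabilizer {m : ℤ} (hm : 3 ≤ m) :
    Disjoint (CoprodI.lift (deltaGen m)).range
      (MulAction.stabilizer SL(2, ℤ) (1 : Fin 2 → ℤ)) := by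
  rw [Subgroup.disjoint_def]
  rintro _ ⟨c, rfl⟩ hfix
  by_cases hc : c = 1
  · rw [hc, map_one]
  refine (CoprodI.lift_smul_ne_self (deltaGen m) (X := pingPongSet) ?_ ?_ ?_ hc hfix).elim
  · rintro i k hik n hn _ ⟨v, hv, rfl⟩
    obtain rfl := Fin.eq_rev_of_ne_two hik
    simp only [pingPongSet, Fin.rev_rev, Set.mem_ofPred_eq] at hv
    exact deltaGen_smul_mem_pingPongSet hm hn hv.le (abs_pos.mp ((abs_nonneg _).trans_lt hv))
  · intro i n hn
    exact deltaGen_smul_mem_pingPongSet hm hn (by simp) (by simp)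
  · simp [pingPongSet]

def fixOneOne (k : ℤ) : SL(2, ℤ) :=
  ⟨!![1 - k, k; -k, 1 + k], by simp [det_fin_two_of]; ring⟩

lemma fixOneOne_mem_stabilizer (k : ℤ) :
    fixOneOne k ∈ MulAction.stabilizer SL(2, ℤ) (1 : Fin 2 → ℤ) := by
  change (fixOneOne k : Matrix (Fin 2) (Fin 2) ℤ) *ᵥ 1 = 1
  ext i
  fin_cases i <;> simp [fixOneOne, mulVec, dotProduct]

instance : Infinite (MulAction.stabilizer SL(2, ℤ) (1 : Fin 2 → ℤ)) :=
  Infinite.of_injective (fun k => ⟨fixOneOne k, fixOneOne_mem_stabilizer k⟩) fun a b h => by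
    simpa [fixOneOne] using congrArg (fun g => (g.1 : Matrix (Fin 2) (Fin 2) ℤ) 0 1) h

lemma closure_le_range_lift_deltaGen (m : ℤ) :
    Subgroup.closure {g : SL(2, ℤ) | (g : Matrix (Fin 2) (Fin 2) ℤ) = !![1, m; 0, 1] ∨
      (g : Matrix (Fin 2) (Fin 2) ℤ) = !![1, 0; m, 1]} ≤ (CoprodI.lift (deltaGen m)).range := by
  rw [Subgroup.closure_le]
  rintro g (hg | hg)
  · refine ⟨CoprodI.of (i := 0) (.ofAdd 1), Subtype.ext ?_⟩
    rw [CoprodI.lift_of, hg, deltaGen_apply]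
    ext i j; fin_cases i <;> fin_cases j <;> simp [transvection_coe]
  · refine ⟨CoprodI.of (i := 1) (.ofAdd 1), Subtype.ext ?_⟩
    rw [CoprodI.lift_of, hg, deltaGen_apply]
    ext i j; fin_cases i <;> fin_cases j <;> simp [transvection_coe]

end ModularGroup

/-- For every integer `m ≥ 3`, the subgroup `Δ_m` of `SL₂(ℤ)` generated by
`[[1,m],[0,1]]` and `[[1,0],[m,1]]` has infinite index in `SL₂(ℤ)`
(infinite index is encoded by `Subgroup.index = 0`). -/
theorem Delta_m_infinite_index (m : ℤ) (hm : 3 ≤ m) :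
    (Subgroup.closure
        {g : Matrix.SpecialLinearGroup (Fin 2) ℤ |
          (g : Matrix (Fin 2) (Fin 2) ℤ) = !![1, m; 0, 1] ∨
          (g : Matrix (Fin 2) (Fin 2) ℤ) = !![1, 0; m, 1]}).index = 0 :=
  Subgroup.index_eq_zero_of_disjoint
    ((ModularGroup.disjoint_range_lift_deltaGen_stabilizer hm).mono_left
      (ModularGroup.closure_le_range_lift_deltaGen m))
end

section
/- Let ℓ ≥ 0 and let Γ_ℓ be the subgroup of SL₂(ℤ) generated by the matrices [[1,2^ℓ],[0,1]] and [[1,0],[2^ℓ,1]]. Then for every odd integer m ≥ 1, the reduction map ρ_m : SL₂(ℤ) → SL₂(ℤ/mℤ) maps Γ_ℓ onto all of SL₂(ℤ/mℤ). -/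
namespace GammaAux

open Matrix

variable {R : Type*} [CommRing R]

/-- Elementary upper unipotent matrix in `SL₂`. -/
def Eup (x : R) : Matrix.SpecialLinearGroup (Fin 2) R :=
  ⟨!![1, x; 0, 1], by simp [Matrix.det_fin_two_of]⟩

/-- Elementary lower unipotent matrix in `SL₂`. -/
def Elo (x : R) : Matrix.SpecialLinearGroup (Fin 2) R :=
  ⟨!![1, 0; x, 1], by simp [Matrix.det_fin_two_of]⟩

/-- The Weyl element `[[0,-1],[1,0]]`. -/
def Wm : Matrix.SpecialLinearGroup (Fin 2) R :=
  ⟨!![0, -1; 1, 0], by simp [Matrix.det_fin_two_of]⟩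

lemma Eup_mul (x y : R) : Eup x * Eup y = Eup (x + y) := by
  apply Subtype.ext
  show !![1, x; 0, 1] * !![1, y; 0, 1] = !![1, x + y; 0, 1]
  simp [Matrix.mul_fin_two, add_comm]

lemma Elo_mul (x y : R) : Elo x * Elo y = Elo (x + y) := by
  apply Subtype.ext
  show !![1, 0; x, 1] * !![1, 0; y, 1] = !![1, 0; x + y, 1]
  simp [Matrix.mul_fin_two, add_comm]

lemma Eup_pow (x : R) (k : ℕ) : (Eup x) ^ k = Eup ((k : R) * x) := by
  induction k with
  | zero =>
    apply Subtype.ext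
    show (1 : Matrix.SpecialLinearGroup (Fin 2) R).val = !![1, (0:ℕ) * x; 0, 1]
    simp [Matrix.one_fin_two]
  | succ n ih => rw [pow_succ, ih, Eup_mul]; congr 1; push_cast; ring

lemma Elo_pow (x : R) (k : ℕ) : (Elo x) ^ k = Elo ((k : R) * x) := by
  induction k with
  | zero =>
    apply Subtype.ext
    show (1 : Matrix.SpecialLinearGroup (Fin 2) R).val = !![1, 0; (0:ℕ) * x, 1]
    simp [Matrix.one_fin_two]
  | succ n ih => rw [pow_succ, ih, Elo_mul]; congr 1; push_cast; ring

lemma TWT : Eup (1 : R) * Wm * Eup 1 = Elo 1 := by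
  apply Subtype.ext
  show !![1, (1:R); 0, 1] * !![0, -1; 1, 0] * !![1, 1; 0, 1] = !![1, 0; 1, 1]
  simp [Matrix.mul_fin_two]

lemma Wm_eq : (Wm : Matrix.SpecialLinearGroup (Fin 2) R) = (Eup 1)⁻¹ * Elo 1 * (Eup 1)⁻¹ := by
  rw [← TWT]
  group

lemma val_Wm_Eup_mul (q : R) (M : Matrix.SpecialLinearGroup (Fin 2) R) :
    (Wm * (Eup q * M)).val 1 0 = M.val 0 0 + q * M.val 1 0 := by
  show ((!![0, -1; 1, 0] : Matrix (Fin 2) (Fin 2) R) * (!![1, q; 0, 1] * M.val)) 1 0 = _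
  simp [Matrix.mul_apply, Fin.sum_univ_succ, Matrix.vecMul, Matrix.vecHead, Matrix.vecTail,
    dotProduct]

lemma upper_decomp (a b d : R) (h : a * d = 1) (hdet : Matrix.det !![a, b; 0, d] = 1) :
    (⟨!![a, b; 0, d], hdet⟩ : Matrix.SpecialLinearGroup (Fin 2) R) =
      Eup (b * a) * (Eup a * Elo (-d) * Eup a * Wm) := by
  apply Subtype.ext
  show !![a, b; 0, d] =
    !![1, b * a; 0, 1] * (!![1, a; 0, 1] * !![1, 0; -d, 1] * !![1, a; 0, 1] * !![0, -1; 1, 0])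
  simp only [Matrix.mul_fin_two]
  ext i j
  fin_cases i <;> fin_cases j <;> simp
  all_goals first
  | ring1
  | linear_combination (a + a * b) * h
  | linear_combination (-(1 + b)) * h
  | linear_combination h

section ZModPart

variable {m : ℕ} [NeZero m]

/-- The subgroup of `SL₂(ℤ/m)` generated by the two elementary unipotents. -/
def C (m : ℕ) : Subgroup (Matrix.SpecialLinearGroup (Fin 2) (ZMod m)) :=
  Subgroup.closure {Eup (1 : ZMod m), Elo (1 : ZMod m)}

lemma Eup_one_mem : Eup (1 : ZMod m) ∈ C m :=
  Subgroup.subset_closure (Set.mem_insert _ _)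

lemma Elo_one_mem : Elo (1 : ZMod m) ∈ C m :=
  Subgroup.subset_closure (Set.mem_insert_of_mem _ rfl)

lemma Eup_mem (x : ZMod m) : Eup x ∈ C m := by
  have h : Eup x = (Eup (1 : ZMod m)) ^ x.val := by
    rw [Eup_pow]
    congr 1
    simp [ZMod.natCast_val, ZMod.cast_id]
  rw [h]
  exact pow_mem Eup_one_mem _

lemma Elo_mem (x : ZMod m) : Elo x ∈ C m := by
  have h : Elo x = (Elo (1 : ZMod m)) ^ x.val := by
    rw [Elo_pow]
    congr 1
    simp [ZMod.natCast_val, ZMod.cast_id]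
  rw [h]
  exact pow_mem Elo_one_mem _

lemma Wm_mem : (Wm : Matrix.SpecialLinearGroup (Fin 2) (ZMod m)) ∈ C m := by
  rw [Wm_eq]
  exact mul_mem (mul_mem (inv_mem Eup_one_mem) Elo_one_mem) (inv_mem Eup_one_mem)

lemma mem_C_of_lower_left_zero (M : Matrix.SpecialLinearGroup (Fin 2) (ZMod m))
    (h0 : M.val 1 0 = 0) : M ∈ C m := by
  have hMval : M.val = !![M.val 0 0, M.val 0 1; 0, M.val 1 1] := by
    rw [← h0]
    exact Matrix.eta_fin_two M.val
  have hdet : Matrix.det !![M.val 0 0, M.val 0 1; 0, M.val 1 1] = 1 := by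
    rw [← hMval]; exact M.2
  have had : M.val 0 0 * M.val 1 1 = 1 := by
    have := hdet
    simp [Matrix.det_fin_two_of] at this
    exact this
  have hM : M = (⟨!![M.val 0 0, M.val 0 1; 0, M.val 1 1], hdet⟩ :
      Matrix.SpecialLinearGroup (Fin 2) (ZMod m)) := Subtype.ext hMval
  rw [hM, upper_decomp _ _ _ had]
  exact mul_mem (Eup_mem _)
    (mul_mem (mul_mem (mul_mem (Eup_mem _) (Elo_mem _)) (Eup_mem _)) Wm_mem)

lemma mem_C_aux (n : ℕ) :
    ∀ M : Matrix.SpecialLinearGroup (Fin 2) (ZMod m), (M.val 1 0).val < n → M ∈ C m := by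
  induction n with
  | zero => intro M h; omega
  | succ n ih =>
    intro M hlt
    by_cases h0 : M.val 1 0 = 0
    · exact mem_C_of_lower_left_zero M h0
    · set a : ZMod m := M.val 0 0 with ha
      set c : ZMod m := M.val 1 0 with hc
      have hcv : c.val ≠ 0 := fun h => h0 (by rwa [← ZMod.val_eq_zero])
      set q : ZMod m := ((a.val / c.val : ℕ) : ZMod m) with hq
      set M' := Wm * (Eup (-q) * M) with hM'
      have hcc : ((c.val : ℕ) : ZMod m) = c := by simp [ZMod.natCast_val, ZMod.cast_id]
      have hentry : M'.val 1 0 = ((a.val % c.val : ℕ) : ZMod m) := by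
        rw [hM', val_Wm_Eup_mul, ← ha, ← hc]
        have h1 : ((c.val * (a.val / c.val) + a.val % c.val : ℕ) : ZMod m) = a := by
          rw [Nat.div_add_mod]
          simp [ha, ZMod.natCast_val, ZMod.cast_id]
        calc a + -q * c
            = ((c.val * (a.val / c.val) + a.val % c.val : ℕ) : ZMod m) + -q * c := by rw [h1]
          _ = ((a.val % c.val : ℕ) : ZMod m) := by
              push_cast
              rw [hq]
              push_cast
              rw [hcc]
              ring
      have hless : (M'.val 1 0).val < n := by
        rw [hentry]
        have hmod : a.val % c.val < c.val := Nat.mod_lt _ (Nat.pos_of_ne_zero hcv)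
        have hcm : c.val < m := ZMod.val_lt c
        rw [ZMod.val_cast_of_lt (by omega)]
        omega
      have hM'mem : M' ∈ C m := ih M' hless
      have : M = (Eup (-q))⁻¹ * (Wm⁻¹ * M') := by
        rw [hM']
        group
      rw [this]
      exact mul_mem (inv_mem (Eup_mem _)) (mul_mem (inv_mem Wm_mem) hM'mem)

lemma mem_C (M : Matrix.SpecialLinearGroup (Fin 2) (ZMod m)) : M ∈ C m :=
  mem_C_aux ((M.val 1 0).val + 1) M (Nat.lt_succ_self _)

end ZModPart

end GammaAux

open GammaAux in
/-- For every `ℓ ≥ 0` and every odd integer `m ≥ 1`, the reduction map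
`ρ_m : SL₂(ℤ) → SL₂(ℤ/mℤ)` maps `Γ_ℓ` onto all of `SL₂(ℤ/mℤ)`. -/
theorem Gamma_ell_surjects_mod_odd (ℓ : ℕ) (m : ℕ) (hm : 1 ≤ m) (hodd : Odd m) :
    Subgroup.map
      (Matrix.SpecialLinearGroup.map (Int.castRingHom (ZMod m)) :
        Matrix.SpecialLinearGroup (Fin 2) ℤ →*
          Matrix.SpecialLinearGroup (Fin 2) (ZMod m))
      (GammaSL2 ℓ) = ⊤ := by
  haveI : NeZero m := ⟨by omega⟩
  set ρ : Matrix.SpecialLinearGroup (Fin 2) ℤ →* Matrix.SpecialLinearGroup (Fin 2) (ZMod m) :=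
    Matrix.SpecialLinearGroup.map (Int.castRingHom (ZMod m)) with hρ
  set H := Subgroup.map ρ (GammaSL2 ℓ) with hH
  -- `u = 2^ℓ` is a unit mod `m`
  set u : ZMod m := (2 : ZMod m) ^ ℓ with hu
  have h2 : Nat.Coprime 2 m := by
    rw [Nat.Prime.coprime_iff_not_dvd Nat.prime_two, ← even_iff_two_dvd]
    exact Nat.not_even_iff_odd.mpr hodd
  have hunit : IsUnit u := by
    have : IsUnit ((2 : ℕ) : ZMod m) := (ZMod.isUnit_iff_coprime 2 m).mpr h2
    simpa [hu] using this.pow ℓ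
  obtain ⟨v, hv⟩ := hunit
  set k : ℕ := ((v⁻¹ : (ZMod m)ˣ) : ZMod m).val with hk
  have hku : (k : ZMod m) * u = 1 := by
    rw [hk]
    simp only [ZMod.natCast_val, ZMod.cast_id]
    rw [← hv, ← Units.val_mul, inv_mul_cancel, Units.val_one]
  -- generators of Γ_ℓ
  have hdetT : Matrix.det !![(1 : ℤ), 2 ^ ℓ; 0, 1] = 1 := by simp [Matrix.det_fin_two_of]
  have hdetL : Matrix.det !![(1 : ℤ), 0; 2 ^ ℓ, 1] = 1 := by simp [Matrix.det_fin_two_of]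
  set gT : Matrix.SpecialLinearGroup (Fin 2) ℤ := ⟨!![1, 2 ^ ℓ; 0, 1], hdetT⟩ with hgT
  set gL : Matrix.SpecialLinearGroup (Fin 2) ℤ := ⟨!![1, 0; 2 ^ ℓ, 1], hdetL⟩ with hgL
  have hgTmem : gT ∈ GammaSL2 ℓ := Subgroup.subset_closure (Or.inl rfl)
  have hgLmem : gL ∈ GammaSL2 ℓ := Subgroup.subset_closure (Or.inr rfl)
  have hρT : ρ gT = Eup u := by
    apply Subtype.ext
    show (!![(1 : ℤ), 2 ^ ℓ; 0, 1]).map (Int.cast : ℤ → ZMod m) = !![1, u; 0, 1]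
    ext i j
    fin_cases i <;> fin_cases j <;> simp [hu] <;> push_cast <;> ring
  have hρL : ρ gL = Elo u := by
    apply Subtype.ext
    show (!![(1 : ℤ), 0; 2 ^ ℓ, 1]).map (Int.cast : ℤ → ZMod m) = !![1, 0; u, 1]
    ext i j
    fin_cases i <;> fin_cases j <;> simp [hu] <;> push_cast <;> ring
  have hEupu : Eup u ∈ H := hρT ▸ Subgroup.mem_map.mpr ⟨gT, hgTmem, rfl⟩
  have hElou : Elo u ∈ H := hρL ▸ Subgroup.mem_map.mpr ⟨gL, hgLmem, rfl⟩
  have hEup1 : Eup (1 : ZMod m) ∈ H := by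
    have : (Eup u) ^ k = Eup (1 : ZMod m) := by rw [Eup_pow, hku]
    exact this ▸ pow_mem hEupu k
  have hElo1 : Elo (1 : ZMod m) ∈ H := by
    have : (Elo u) ^ k = Elo (1 : ZMod m) := by rw [Elo_pow, hku]
    exact this ▸ pow_mem hElou k
  rw [eq_top_iff]
  intro M _
  have hCle : C m ≤ H := by
    rw [C, Subgroup.closure_le]
    rintro x hx
    rcases hx with rfl | hx
    · exact hEup1
    · rw [Set.mem_singleton_iff] at hx
      rw [hx]
      exact hElo1
  exact hCle (mem_C M)
end

section
/- Let p > 3 be a prime and let g be a 2×2 matrix over the ring ℤ_p of p-adic integers of the form g = [[1,1],[0,1]] + p·s for some 2×2 matrix s over ℤ_p. Then there exists a 2×2 matrix t over ℤ_p such that g^p = [[1,p],[0,1]] + p²·t. -/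
set_option maxHeartbeats 2000000

private noncomputable def Smat {p : ℕ} [Fact p.Prime] (s : Matrix (Fin 2) (Fin 2) ℤ_[p]) (k : ℕ) :
    Matrix (Fin 2) (Fin 2) ℤ_[p] :=
  !![(k : ℤ_[p]) * s 0 0 + (k.choose 2 : ℤ_[p]) * s 1 0,
      (k.choose 2 : ℤ_[p]) * (s 0 0 + s 1 1) + (k : ℤ_[p]) * s 0 1 + (k.choose 3 : ℤ_[p]) * s 1 0;
     (k : ℤ_[p]) * s 1 0,
      (k.choose 2 : ℤ_[p]) * s 1 0 + (k : ℤ_[p]) * s 1 1]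

private lemma pow_form (p : ℕ) [Fact p.Prime]
    (g s : Matrix (Fin 2) (Fin 2) ℤ_[p])
    (hg : g = !![1, 1; 0, 1] + (p : ℤ_[p]) • s) (k : ℕ) :
    ∃ w : Matrix (Fin 2) (Fin 2) ℤ_[p],
      g ^ k = !![1, (k : ℤ_[p]); 0, 1] + (p : ℤ_[p]) • Smat s k
        + ((p : ℤ_[p]) ^ 2) • w := by
  induction k with
  | zero =>
      refine ⟨0, ?_⟩
      ext i j
      fin_cases i <;> fin_cases j <;>
        simp [Smat, Matrix.one_apply]
  | succ k ih =>
      obtain ⟨w, hw⟩ := ih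
      refine ⟨w * !![1, 1; 0, 1] + Smat s k * s + (p : ℤ_[p]) • (w * s), ?_⟩
      have key : (!![1, (k : ℤ_[p]); 0, 1] : Matrix (Fin 2) (Fin 2) ℤ_[p]) * !![1, 1; 0, 1]
          = !![1, ((k + 1 : ℕ) : ℤ_[p]); 0, 1] := by
        push_cast
        ext i j
        fin_cases i <;> fin_cases j <;>
          simp [Matrix.mul_apply, Fin.sum_univ_two] <;> ring
      have key2 : Smat s k * !![1, 1; 0, 1] + !![1, (k : ℤ_[p]); 0, 1] * s
          = Smat s (k + 1) := by
        ext i j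
        have h2 : ((k+1).choose 2 : ℤ_[p]) = (k : ℤ_[p]) + (k.choose 2 : ℤ_[p]) := by
          rw [Nat.choose_succ_succ]
          push_cast [Nat.choose_one_right]
          ring
        have h3 : ((k+1).choose 3 : ℤ_[p]) = (k.choose 2 : ℤ_[p]) + (k.choose 3 : ℤ_[p]) := by
          rw [Nat.choose_succ_succ]
          push_cast
          ring
        fin_cases i <;> fin_cases j <;>
          simp [Smat, Matrix.mul_apply, Matrix.vecMul, Matrix.vecHead, Matrix.vecTail, Function.comp, Fin.sum_univ_two, h2, h3] <;>
          push_cast <;> ring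
      calc g ^ (k + 1) = g ^ k * g := pow_succ g k
        _ = (!![1, (k : ℤ_[p]); 0, 1] + (p : ℤ_[p]) • Smat s k + ((p : ℤ_[p]) ^ 2) • w)
              * (!![1, 1; 0, 1] + (p : ℤ_[p]) • s) := by rw [hw, hg]
        _ = _ := by
          rw [← key2, ← key]
          noncomm_ring
          simp only [smul_add, smul_smul, mul_assoc]
          abel

/-- Let `p > 3` be a prime and let `g` be a `2×2` matrix over `ℤ_p` of the
form `g = [[1,1],[0,1]] + p·s` for some `2×2` matrix `s` over `ℤ_p`.  Then
there exists a `2×2` matrix `t` over `ℤ_p` such that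
`g^p = [[1,p],[0,1]] + p²·t`. -/
theorem pth_power_of_unipotent_perturbation (p : ℕ) [Fact p.Prime] (hp : 3 < p)
    (g s : Matrix (Fin 2) (Fin 2) ℤ_[p])
    (hg : g = !![1, 1; 0, 1] + (p : ℤ_[p]) • s) :
    ∃ t : Matrix (Fin 2) (Fin 2) ℤ_[p],
      g ^ p = !![1, (p : ℤ_[p]); 0, 1] + ((p : ℤ_[p]) ^ 2) • t := by
  obtain ⟨w, hw⟩ := pow_form p g s hg p
  have hprime : p.Prime := Fact.out
  obtain ⟨a, ha⟩ := hprime.dvd_choose_self (by norm_num) (by omega) (k := 2)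
  obtain ⟨b, hb⟩ := hprime.dvd_choose_self (by norm_num) (by omega) (k := 3)
  refine ⟨!![s 0 0 + (a : ℤ_[p]) * s 1 0,
      (a : ℤ_[p]) * (s 0 0 + s 1 1) + s 0 1 + (b : ℤ_[p]) * s 1 0;
      s 1 0, (a : ℤ_[p]) * s 1 0 + s 1 1] + w, ?_⟩
  rw [hw]
  have hS : Smat s p = (p : ℤ_[p]) • !![s 0 0 + (a : ℤ_[p]) * s 1 0,
      (a : ℤ_[p]) * (s 0 0 + s 1 1) + s 0 1 + (b : ℤ_[p]) * s 1 0;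
      s 1 0, (a : ℤ_[p]) * s 1 0 + s 1 1] := by
    ext i j
    fin_cases i <;> fin_cases j <;>
      simp [Smat, ha, hb] <;> push_cast <;> ring
  rw [hS, smul_smul, ← pow_two, smul_add]
  ring_nf
  abel
end

section
/- (Serre) Let p > 3 be a prime and let Δ be a closed subgroup of SL₂(ℤ_p) such that the reduction map ρ_p : SL₂(ℤ_p) → SL₂(𝔽_p) satisfies ρ_p(Δ) = SL₂(𝔽_p). Then Δ = SL₂(ℤ_p). -/
/-- `SL₂(ℤ_p)` carries the topology induced from the entrywise `p`-adic
topology on `2×2` matrices over `ℤ_p`. -/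
noncomputable instance SL2Padic.topologicalSpace (p : ℕ) [Fact p.Prime] :
    TopologicalSpace (Matrix.SpecialLinearGroup (Fin 2) ℤ_[p]) :=
  TopologicalSpace.induced
    ((↑) : Matrix.SpecialLinearGroup (Fin 2) ℤ_[p] → Matrix (Fin 2) (Fin 2) ℤ_[p])
    inferInstance

/-!
Since `Δ` is closed, it suffices to approximate every `g ∈ SL₂(ℤ_p)` by elements of `Δ`
modulo every `p ^ n`. For `n ≥ 1`, if `δ ∈ Δ` approximates `g` modulo `p ^ n`, then
`g δ⁻¹ = 1 + p ^ n A` with `p ∣ tr A` (because `det = 1`), so it is enough to find in `Δ`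
an element `≡ 1 + p ^ n A (mod p ^ (n + 1))` for every such `A`. These come from `p`-th
powers: if `x ≡ 1 + p ^ n A (mod p ^ (n + 1))` then
`x ^ p ≡ 1 + p ^ (n + 1) A (mod p ^ (n + 2))`, and for `n = 0` the same holds when `A` is
square-zero and `x ∈ Δ` lifts the unipotent `1 + A`.
Modulo `p`, a matrix with `p ∣ tr A` is a sum of three square-zero matrices, and modulo
`p ^ (n + 1)` multiplying such elements adds the `A`s.
-/

open Matrix Filter Topology MatrixGroups

open Finset in
theorem exists_one_add_pow_prime_eq {A : Type*} [Ring A] {p : ℕ} (hp : p.Prime) (y : A) :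
    ∃ z, (1 + y) ^ p = 1 + p • y + y ^ p + p • (y ^ 2 * z) := by
  refine ⟨∑ k ∈ Ioo 1 p, y ^ (k - 2) * (p.choose k / p : ℕ), ?_⟩
  rw [add_comm, (Commute.one_right y).add_pow_prime_eq' hp, ← Ico_add_one_left_eq_Ioo,
    zero_add, ← Ioo_insert_left hp.one_lt, sum_insert (by simp), mul_sum]
  simp only [one_pow, mul_one, pow_one, Nat.choose_one_right, Nat.div_self hp.pos, Nat.cast_one,
    nsmul_eq_mul, mul_add, ← mul_assoc, ← pow_add]
  conv_rhs => rw [sum_congr rfl fun k (hk : k ∈ Ioo 1 p) => by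
    rw [Nat.add_sub_cancel' (mem_Ioo.1 hk).1]]
  abel

section ModEqPow

variable {A : Type*} {p m : ℕ}

def ModEqPow [AddCommMonoid A] (p m : ℕ) (x y : A) : Prop := ∃ c : A, x = y + p ^ m • c

theorem modEqPow_zero [AddCommGroup A] (x y : A) : ModEqPow p 0 x y := ⟨x - y, by simp⟩

namespace ModEqPow

section AddCommMonoid

variable [AddCommMonoid A] {x y z : A}

protected theorem refl (x : A) : ModEqPow p m x x := ⟨0, by simp⟩

theorem trans (h : ModEqPow p m x y) (h' : ModEqPow p m y z) : ModEqPow p m x z := by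
  obtain ⟨c, rfl⟩ := h
  obtain ⟨d, rfl⟩ := h'
  exact ⟨d + c, by rw [smul_add, add_assoc]⟩

end AddCommMonoid

theorem symm [AddCommGroup A] {x y : A} (h : ModEqPow p m x y) : ModEqPow p m y x := by
  obtain ⟨c, rfl⟩ := h
  exact ⟨-c, by simp⟩

theorem mul [Ring A] {x y z w : A} (h : ModEqPow p m x y) (h' : ModEqPow p m z w) :
    ModEqPow p m (x * z) (y * w) := by
  obtain ⟨c, rfl⟩ := h
  obtain ⟨d, rfl⟩ := h'
  refine ⟨c * w + y * d + p ^ m • (c * d), ?_⟩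
  simp only [mul_add, add_mul, smul_mul_assoc, mul_smul_comm, smul_add, smul_smul]
  abel

end ModEqPow

theorem one_add_pow_prime_modEqPow [Ring A] {n : ℕ} (hp : p.Prime) (hp3 : 3 < p) {y a : A}
    (hy : ModEqPow p (n + 1) y (p ^ n • a)) (hy2 : ModEqPow p (n + 1) (y ^ 2) 0) :
    ModEqPow p (n + 2) ((1 + y) ^ p) (1 + p ^ (n + 1) • a) := by
  obtain ⟨z, hz⟩ := exists_one_add_pow_prime_eq hp y
  obtain ⟨b, hb⟩ := hy
  obtain ⟨c, hc⟩ := hy2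
  rw [zero_add] at hc
  -- `y ^ p = (y ^ 2) ^ ((p - 1) / 2) * y` vanishes modulo `p ^ (n + 2)` only because
  -- `(p - 1) / 2 ≥ 2`: this is where `3 < p` is needed.
  obtain ⟨j, hj⟩ : ∃ j, p = 2 * (j + 2) + 1 := by
    obtain ⟨k, hk⟩ := hp.odd_of_ne_two (by omega)
    exact ⟨k - 2, by omega⟩
  have hyp : y ^ p = p ^ (n + 2) • p ^ (n * j + n + j) • (c ^ (j + 2) * y) := by
    rw [hj, pow_succ, pow_mul, hc, smul_pow, smul_mul_assoc, smul_smul, ← pow_add, ← pow_mul,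
      ← hj]
    congr 2
    ring
  have hpy : p • y = p ^ (n + 1) • a + p ^ (n + 2) • b := by
    rw [hb, smul_add, smul_smul, smul_smul, ← pow_succ', ← pow_succ']
  refine ⟨b + p ^ (n * j + n + j) • (c ^ (j + 2) * y) + c * z, ?_⟩
  rw [hz, hpy, hyp, hc, smul_mul_assoc]
  module

end ModEqPow

namespace Matrix

variable {R : Type*} [CommRing R]

theorem dvd_trace_of_det_one_add_smul_eq_one {n : Type*} [Fintype n] [DecidableEq n] [IsDomain R]
    {r : R} (hr : r ≠ 0) {A : Matrix n n R} (h : det (1 + r • A) = 1) : r ∣ trace A := by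
  rw [det_one_add_smul] at h
  set e := (det (1 + (Polynomial.X : Polynomial R) • A.map Polynomial.C)).divX.divX.eval r
  refine ⟨-e, mul_right_cancel₀ hr ?_⟩
  linear_combination h

theorem det_one_add_fin_two (N : Matrix (Fin 2) (Fin 2) R) :
    det (1 + N) = 1 + trace N + det N := by
  rw [det_fin_two, det_fin_two, trace_fin_two]
  simp only [Matrix.add_apply, one_apply_eq, one_apply_ne zero_ne_one, one_apply_ne one_ne_zero]
  ring

theorem mul_self_eq_zero_of_trace_eq_zero_of_det_eq_zero [Nontrivial R]
    {N : Matrix (Fin 2) (Fin 2) R} (ht : trace N = 0) (hd : det N = 0) : N * N = 0 := by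
  have h := aeval_self_charpoly N
  rw [charpoly_fin_two, ht, hd] at h
  simpa [sq] using h

end Matrix

namespace PadicInt

variable {p : ℕ} [Fact p.Prime]

theorem modEqPow_one_of_map_toZMod_eq {m n : Type*} {X Y : Matrix m n ℤ_[p]}
    (h : X.map toZMod = Y.map toZMod) : ModEqPow p 1 X Y := by
  have hdvd (i : m) (j : n) : ∃ b : ℤ_[p], X i j = Y i j + p * b := by
    have hker : X i j - Y i j ∈ RingHom.ker (toZMod : ℤ_[p] →+* ZMod p) := by
      rw [RingHom.mem_ker, map_sub, sub_eq_zero]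
      exact congrFun₂ h i j
    rw [ker_toZMod, maximalIdeal_eq_span_p, Ideal.mem_span_singleton] at hker
    obtain ⟨b, hb⟩ := hker
    exact ⟨b, by rw [← hb]; abel⟩
  choose B hB using hdvd
  exact ⟨of B, by ext i j; simp [hB, nsmul_eq_mul]⟩

theorem tendsto_of_modEqPow {x : ℕ → ℤ_[p]} {a : ℤ_[p]} (h : ∀ k, ModEqPow p k (x k) a) :
    Tendsto x atTop (𝓝 a) := by
  rw [tendsto_iff_norm_sub_tendsto_zero]
  have hp : (1 : ℝ) < p := by exact_mod_cast (Fact.out : p.Prime).one_lt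
  refine squeeze_zero (g := fun k => (p : ℝ)⁻¹ ^ k) (fun _ => norm_nonneg _) (fun k => ?_)
    (tendsto_pow_atTop_nhds_zero_of_lt_one (by positivity) (inv_lt_one_of_one_lt₀ hp))
  obtain ⟨c, hc⟩ := h k
  rw [hc, add_sub_cancel_left, nsmul_eq_mul, norm_mul, Nat.cast_pow, norm_pow, norm_p, inv_pow]
  exact mul_le_of_le_one_right (by positivity) (norm_le_one c)

theorem tendsto_matrix_of_modEqPow {m n : Type*} {X : ℕ → Matrix m n ℤ_[p]}
    {Y : Matrix m n ℤ_[p]} (h : ∀ k, ModEqPow p k (X k) Y) : Tendsto X atTop (𝓝 Y) := by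
  refine tendsto_pi_nhds.2 fun i => tendsto_pi_nhds.2 fun j => tendsto_of_modEqPow fun k => ?_
  obtain ⟨C, hC⟩ := h k
  exact ⟨C i j, by rw [hC]; rfl⟩

end PadicInt

namespace SL2Padic

variable {p : ℕ} [Fact p.Prime] {Δ : Subgroup SL(2, ℤ_[p])}

local notation "M₂" => Matrix (Fin 2) (Fin 2) ℤ_[p]

local notation "ρ" => Matrix.SpecialLinearGroup.map (PadicInt.toZMod : ℤ_[p] →+* ZMod p)

theorem isInducing_coe : Topology.IsInducing ((↑) : SL(2, ℤ_[p]) → M₂) :=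
  Topology.IsInducing.induced _

theorem exists_mem_modEqPow_one (hsurj : Δ.map ρ = ⊤) (u : SL(2, ℤ_[p])) :
    ∃ x ∈ Δ, ModEqPow p 1 (x : M₂) u := by
  obtain ⟨x, hxΔ, hx⟩ := Subgroup.mem_map.1 (hsurj ▸ Subgroup.mem_top (ρ u))
  exact ⟨x, hxΔ, PadicInt.modEqPow_one_of_map_toZMod_eq (congrArg Subtype.val hx)⟩

variable (Δ) in
def IsLiftable (n : ℕ) (A : M₂) : Prop :=
  ∃ x ∈ Δ, ModEqPow p (n + 1) (x : M₂) (1 + p ^ n • A)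

namespace IsLiftable

variable {n : ℕ} {A B : Matrix (Fin 2) (Fin 2) ℤ_[p]}

theorem add (hn : 1 ≤ n) (hA : IsLiftable Δ n A) (hB : IsLiftable Δ n B) :
    IsLiftable Δ n (A + B) := by
  obtain ⟨x, hxΔ, hx⟩ := hA
  obtain ⟨y, hyΔ, hy⟩ := hB
  refine ⟨x * y, mul_mem hxΔ hyΔ, ?_⟩
  rw [Matrix.SpecialLinearGroup.coe_mul]
  refine (hx.mul hy).trans ⟨p ^ (n - 1) • (A * B), ?_⟩
  rw [smul_smul, ← pow_add, show n + 1 + (n - 1) = n + n by omega, pow_add]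
  simp only [mul_add, add_mul, one_mul, mul_one, smul_mul_assoc, mul_smul_comm, smul_smul,
    smul_add]
  abel

theorem of_modEqPow (hAB : ModEqPow p 1 A B) (hB : IsLiftable Δ n B) : IsLiftable Δ n A := by
  obtain ⟨x, hxΔ, hx⟩ := hB
  obtain ⟨C, rfl⟩ := hAB
  refine ⟨x, hxΔ, hx.trans ⟨-C, ?_⟩⟩
  rw [smul_add, smul_smul, ← pow_add, smul_neg]
  abel

theorem succ (hp3 : 3 < p) (hn : 1 ≤ n) (hA : IsLiftable Δ n A) : IsLiftable Δ (n + 1) A := by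
  obtain ⟨x, hxΔ, C, hC⟩ := hA
  refine ⟨x ^ p, pow_mem hxΔ p, ?_⟩
  have hx : (x : M₂) - 1 = p ^ n • (A + p • C) := by
    rw [hC, smul_add, smul_smul, ← pow_succ]
    abel
  have hy : ModEqPow p (n + 1) ((x : M₂) - 1) (p ^ n • A) :=
    ⟨C, by rw [hx, smul_add, smul_smul, ← pow_succ]⟩
  have hy2 : ModEqPow p (n + 1) (((x : M₂) - 1) ^ 2) 0 :=
    ⟨p ^ (n - 1) • (A + p • C) ^ 2, by rw [hx, smul_pow, zero_add, smul_smul, ← pow_add,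
      ← pow_mul, show n * 2 = n + 1 + (n - 1) by omega]⟩
  rw [Matrix.SpecialLinearGroup.coe_pow, ← add_sub_cancel (1 : M₂) x]
  exact one_add_pow_prime_modEqPow Fact.out hp3 hy hy2

end IsLiftable

theorem isLiftable_one_of_trace_eq_zero_of_det_eq_zero (hp3 : 3 < p) (hsurj : Δ.map ρ = ⊤)
    {N : M₂} (ht : trace N = 0) (hd : det N = 0) : IsLiftable Δ 1 N := by
  have hdet : det (1 + N) = 1 := by rw [det_one_add_fin_two, ht, hd, add_zero, add_zero]
  obtain ⟨x, hxΔ, C, hC⟩ := exists_mem_modEqPow_one hsurj ⟨1 + N, hdet⟩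
  refine ⟨x ^ p, pow_mem hxΔ p, ?_⟩
  have hy : ModEqPow p 1 ((x : M₂) - 1) N := ⟨C, by rw [hC]; show 1 + N + _ - 1 = _; abel⟩
  have hy2 : ModEqPow p 1 (((x : M₂) - 1) ^ 2) 0 := by
    simpa only [sq, mul_self_eq_zero_of_trace_eq_zero_of_det_eq_zero ht hd] using hy.mul hy
  rw [Matrix.SpecialLinearGroup.coe_pow, ← add_sub_cancel (1 : M₂) x]
  exact one_add_pow_prime_modEqPow (n := 0) Fact.out hp3 (by rwa [pow_zero, one_smul]) hy2

theorem isLiftable_one_of_dvd_trace (hp3 : 3 < p) (hsurj : Δ.map ρ = ⊤) {A : M₂}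
    (hA : (p : ℤ_[p]) ∣ trace A) : IsLiftable Δ 1 A := by
  obtain ⟨a, b, c, d, rfl⟩ : ∃ a b c d, A = !![a, b; c, d] := ⟨_, _, _, _, eta_fin_two A⟩
  obtain ⟨τ, hτ⟩ := hA
  obtain rfl : d = p * τ - a := by
    rw [trace_fin_two_of] at hτ
    linear_combination hτ
  have hsplit : ModEqPow p 1 !![a, b; c, p * τ - a]
      (!![a, a; -a, -a] + !![0, b - a; 0, 0] + !![0, 0; c + a, 0]) := by
    refine ⟨!![0, 0; 0, τ], ?_⟩
    simp only [of_add_of, smul_of, cons_add_cons, smul_cons, empty_add_empty, smul_empty,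
      pow_one]
    congr <;> ring
  have hlift {N : M₂} (ht : trace N = 0) (hd : det N = 0) : IsLiftable Δ 1 N :=
    isLiftable_one_of_trace_eq_zero_of_det_eq_zero hp3 hsurj ht hd
  refine (((hlift ?_ ?_).add le_rfl (hlift ?_ ?_)).add le_rfl (hlift ?_ ?_)).of_modEqPow hsplit
  all_goals simp [trace_fin_two_of, det_fin_two_of]

theorem isLiftable_of_dvd_trace (hp3 : 3 < p) (hsurj : Δ.map ρ = ⊤) {n : ℕ} (hn : 1 ≤ n)
    {A : M₂} (hA : (p : ℤ_[p]) ∣ trace A) : IsLiftable Δ n A := by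
  induction n, hn using Nat.le_induction with
  | base => exact isLiftable_one_of_dvd_trace hp3 hsurj hA
  | succ n hn ih => exact ih.succ hp3 hn

theorem exists_mem_modEqPow_succ (hp3 : 3 < p) (hsurj : Δ.map ρ = ⊤) {n : ℕ} (hn : 1 ≤ n)
    {g δ : SL(2, ℤ_[p])} (hδΔ : δ ∈ Δ) (hδ : ModEqPow p n (δ : M₂) g) :
    ∃ δ' ∈ Δ, ModEqPow p (n + 1) (δ' : M₂) g := by
  obtain ⟨C, hC⟩ := hδ.symm
  set A := C * ((δ⁻¹ : SL(2, ℤ_[p])) : M₂)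
  have hgδ : ((g * δ⁻¹ : SL(2, ℤ_[p])) : M₂) = 1 + p ^ n • A := by
    rw [Matrix.SpecialLinearGroup.coe_mul, hC, add_mul, smul_mul_assoc,
      ← Matrix.SpecialLinearGroup.coe_mul, mul_inv_cancel, Matrix.SpecialLinearGroup.coe_one]
  have htr : (p : ℤ_[p]) ∣ trace A := by
    refine (dvd_pow_self _ (by omega : n ≠ 0)).trans (dvd_trace_of_det_one_add_smul_eq_one
      (pow_ne_zero _ (Nat.cast_ne_zero.2 (Fact.out : p.Prime).ne_zero)) ?_)
    rw [← Nat.cast_pow, Nat.cast_smul_eq_nsmul, ← hgδ, Matrix.SpecialLinearGroup.det_coe]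
  obtain ⟨y, hyΔ, hy⟩ := isLiftable_of_dvd_trace hp3 hsurj hn htr
  refine ⟨y * δ, mul_mem hyΔ hδΔ, ?_⟩
  rw [← hgδ] at hy
  have hyδ := hy.mul (ModEqPow.refl (δ : M₂))
  rwa [← Matrix.SpecialLinearGroup.coe_mul, ← Matrix.SpecialLinearGroup.coe_mul,
    inv_mul_cancel_right] at hyδ

theorem exists_mem_modEqPow (hp3 : 3 < p) (hsurj : Δ.map ρ = ⊤) (g : SL(2, ℤ_[p])) :
    ∀ n, ∃ δ ∈ Δ, ModEqPow p n (δ : M₂) g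
  | 0 => ⟨1, one_mem Δ, modEqPow_zero _ _⟩
  | 1 => exists_mem_modEqPow_one hsurj g
  | n + 2 =>
    have ⟨_, hδΔ, hδ⟩ := exists_mem_modEqPow hp3 hsurj g (n + 1)
    exists_mem_modEqPow_succ hp3 hsurj (by omega) hδΔ hδ

end SL2Padic

/-- (Serre) Let `p > 3` be a prime and `Δ` a closed subgroup of `SL₂(ℤ_p)`
whose image under the reduction map `ρ_p : SL₂(ℤ_p) → SL₂(𝔽_p)` is all of
`SL₂(𝔽_p)`.  Then `Δ = SL₂(ℤ_p)`. -/
theorem closed_subgroup_surjecting_mod_p_is_full (p : ℕ) [Fact p.Prime]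
    (hp : 3 < p) (Δ : Subgroup (Matrix.SpecialLinearGroup (Fin 2) ℤ_[p]))
    (hclosed : IsClosed (Δ : Set (Matrix.SpecialLinearGroup (Fin 2) ℤ_[p])))
    (hsurj : Subgroup.map
        (Matrix.SpecialLinearGroup.map (PadicInt.toZMod :
          ℤ_[p] →+* ZMod p)) Δ = ⊤) :
    Δ = ⊤ := by
  refine eq_top_iff.2 fun g _ => ?_
  choose δ hδΔ hδ using SL2Padic.exists_mem_modEqPow hp hsurj g
  have hlim : Tendsto δ atTop (𝓝 g) :=
    SL2Padic.isInducing_coe.tendsto_nhds_iff.2 (PadicInt.tendsto_matrix_of_modEqPow hδ)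
  exact hclosed.mem_of_tendsto hlim (.of_forall hδΔ)
end

section
/- Let p be a prime and let H be a subgroup of GL₂(𝔽_p) whose order is divisible by p, and let H_p be a Sylow p-subgroup of H. Then either H_p is a normal subgroup of H, or H contains SL₂(𝔽_p) (i.e. H contains the image of SL₂(𝔽_p) in GL₂(𝔽_p)). -/
/-!
The `p`-part of `|GL₂(𝔽_p)| = p (p - 1)² (p + 1)` is `p`, so the Sylow `p`-subgroups of `H` have
order `p` and pairwise intersect trivially. If they are not normal there are at least `p + 1` of
them, so `H` contains at least `(p + 1)(p - 1) + 1 = p²` solutions of `g ^ p = 1`. In `GL₂(𝔽_p)`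
these are the unipotent elements `1 + N` with `N² = 0`, and there are at most `p²` of them; hence
`H` contains all of them, in particular all elementary matrices, which generate `SL₂(𝔽_p)`.
-/

open Matrix

theorem Nat.not_dvd_pow_sub_one {p k : ℕ} (hp : 1 < p) (hk : k ≠ 0) : ¬ p ∣ p ^ k - 1 :=
  fun h => hp.ne' <| Nat.dvd_one.mp <|
    (Nat.dvd_sub_iff_right (Nat.one_le_pow _ _ (by omega)) (dvd_pow_self p hk)).mp h

section GroupTheory

variable {G : Type*} [Group G] {p : ℕ} [Fact p.Prime]

theorem Subgroup.eq_of_card_eq_prime_of_mem {P Q : Subgroup G} (hP : Nat.card P = p)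
    (hQ : Nat.card Q = p) {g : G} (hgP : g ∈ P) (hgQ : g ∈ Q) (hg : g ≠ 1) : P = Q := by
  have hp : p.Prime := Fact.out
  have : Finite P := Nat.finite_of_card_ne_zero (hP ▸ hp.ne_zero)
  have : Finite Q := Nat.finite_of_card_ne_zero (hQ ▸ hp.ne_zero)
  have hne : Nat.card (P ⊓ Q : Subgroup G) ≠ 1 := fun h =>
    hg (Subgroup.mem_bot.mp (Subgroup.card_eq_one.mp h ▸ ⟨hgP, hgQ⟩))
  have hcard : Nat.card (P ⊓ Q : Subgroup G) = p :=
    ((Nat.dvd_prime hp).mp (hP ▸ Subgroup.card_dvd_of_le inf_le_left)).resolve_left hne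
  exact (Subgroup.eq_of_le_of_card_ge inf_le_left (hP ▸ hcard.ge)).symm.trans
    (Subgroup.eq_of_le_of_card_ge inf_le_right (hQ ▸ hcard.ge))

variable [Finite G]

theorem Sylow.card_eq_of_dvd_of_not_sq_dvd (P : Sylow p G) (hdvd : p ∣ Nat.card G)
    (hsq : ¬ p ^ 2 ∣ Nat.card G) : Nat.card P = p := by
  have hp : p.Prime := Fact.out
  obtain ⟨k, hk⟩ := IsPGroup.iff_card.mp P.isPGroup'
  have h1 : p ^ 1 ∣ Nat.card P := P.pow_dvd_card_of_pow_dvd_card (by rwa [pow_one])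
  have h2 : ¬ p ^ 2 ∣ Nat.card P := fun h => hsq (h.trans (Subgroup.card_subgroup_dvd_card _))
  rw [hk, Nat.pow_dvd_pow_iff_le_right hp.one_lt] at h1 h2
  rw [hk, show k = 1 by omega, pow_one]

theorem Sylow.add_one_le_card_of_not_normal (P : Sylow p G) (hP : ¬ (P : Subgroup G).Normal) :
    p + 1 ≤ Nat.card (Sylow p G) := by
  have hne : Nat.card (Sylow p G) ≠ 1 := fun h =>
    have := (Nat.card_eq_one_iff_unique.mp h).1
    hP P.normal_of_subsingleton
  have hpos : 0 < Nat.card (Sylow p G) := Nat.card_pos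
  have hdvd : p ∣ Nat.card (Sylow p G) - 1 :=
    (Nat.modEq_iff_dvd' hpos).mp (card_sylow_modEq_one p G).symm
  have := Nat.le_of_dvd (by omega) hdvd
  omega

theorem Sylow.card_mul_pred_add_one_le_card_pow_eq_one (hcard : ∀ P : Sylow p G, Nat.card P = p) :
    Nat.card (Sylow p G) * (p - 1) + 1 ≤ Nat.card {g : G // g ^ p = 1} := by
  classical
  let f : Option (Σ P : Sylow p G, {x : (P : Subgroup G) // x ≠ 1}) → {g : G // g ^ p = 1}
    | none => ⟨1, one_pow p⟩
    | some ⟨P, x⟩ => ⟨x.1, by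
        rw [← Subgroup.coe_pow,
          orderOf_dvd_iff_pow_eq_one.mp ((orderOf_dvd_natCard x.1).trans (hcard P).dvd),
          Subgroup.coe_one]⟩
  have hf : Function.Injective f := by
    rintro (_ | ⟨P, x, hx⟩) (_ | ⟨Q, y, hy⟩) hxy <;> simp only [f, Subtype.mk.injEq] at hxy
    · rfl
    · exact absurd (Subtype.ext hxy.symm) hy
    · exact absurd (Subtype.ext hxy) hx
    · obtain rfl : P = Q := Sylow.ext <| Subgroup.eq_of_card_eq_prime_of_mem (hcard P) (hcard Q)
        x.2 (hxy ▸ y.2) (fun h => hx (Subtype.ext h))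
      obtain rfl : x = y := Subtype.ext hxy
      rfl
  have hcard_ne_one (P : Sylow p G) : Nat.card {x : (P : Subgroup G) // x ≠ 1} = p - 1 := by
    have := Nat.card_congr (Equiv.optionSubtypeNe (1 : (P : Subgroup G)))
    rw [Finite.card_option, hcard P] at this
    omega
  have := Fintype.ofFinite (Sylow p G)
  have := Nat.card_le_card_of_injective f hf
  rwa [Finite.card_option, Nat.card_sigma, Finset.sum_congr rfl fun P _ => hcard_ne_one P,
    Finset.sum_const, Finset.card_univ, smul_eq_mul, ← Nat.card_eq_fintype_card] at this

theorem Subgroup.mem_of_card_pow_eq_one_le (H : Subgroup G) {n : ℕ}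
    (hcard : Nat.card {g : G // g ^ n = 1} ≤ Nat.card {h : H // h ^ n = 1})
    {g : G} (hg : g ^ n = 1) : g ∈ H := by
  let f : {h : H // h ^ n = 1} → {g : G // g ^ n = 1} :=
    fun h => ⟨h.1, by rw [← Subgroup.coe_pow, h.2, Subgroup.coe_one]⟩
  have hf : Function.Injective f := fun h h' e =>
    Subtype.ext (Subtype.ext (congrArg Subtype.val e :))
  obtain ⟨h, hh⟩ := (hf.bijective_of_nat_card_le hcard).2 ⟨g, hg⟩
  obtain rfl : (h.1 : G) = g := congrArg Subtype.val hh
  exact h.1.2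

end GroupTheory

theorem Matrix.pow_card_eq_zero_of_isNilpotent {n R : Type*} [Fintype n] [DecidableEq n]
    [CommRing R] [IsReduced R] {M : Matrix n n R} (hM : IsNilpotent M) :
    M ^ Fintype.card n = 0 := by
  have h : M.charpoly = Polynomial.X ^ Fintype.card n := sub_eq_zero.mp <| Polynomial.ext fun i =>
    (Polynomial.isNilpotent_iff.mp (isNilpotent_charpoly_sub_pow_of_isNilpotent hM) i).eq_zero
  simpa [h] using M.aeval_self_charpoly

namespace Matrix

variable {F : Type*} [Field F]

-- `!![a, b; c, -a]` squares to zero iff `a² + bc = 0`; the two summands are `b ≠ 0` and `b = 0`.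
def sqZeroParam : (F × Fˣ) ⊕ F → Matrix (Fin 2) (Fin 2) F
  | .inl (a, b) => !![a, b; -(a ^ 2 / b), -a]
  | .inr c => !![0, 0; c, 0]

theorem exists_sqZeroParam_eq {N : Matrix (Fin 2) (Fin 2) F} (hN : N ^ 2 = 0) :
    ∃ x, sqZeroParam x = N := by
  have h (i j : Fin 2) : (N * N) i j = 0 := by rw [← sq, hN, zero_apply]
  have h00 := h 0 0
  have h01 := h 0 1
  have h11 := h 1 1
  simp only [mul_apply, Fin.sum_univ_two] at h00 h01 h11
  by_cases hb : N 0 1 = 0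
  · refine ⟨.inr (N 1 0), ?_⟩
    have ha : N 0 0 = 0 := pow_eq_zero_iff two_ne_zero |>.mp <| by
      linear_combination h00 - N 1 0 * hb
    have hd : N 1 1 = 0 := pow_eq_zero_iff two_ne_zero |>.mp <| by
      linear_combination h11 - N 1 0 * hb
    ext i j; fin_cases i <;> fin_cases j <;> simp [sqZeroParam, ha, hb, hd]
  · refine ⟨.inl (N 0 0, Units.mk0 _ hb), ?_⟩
    have hd : N 1 1 = -N 0 0 := by
      have : N 0 1 * (N 0 0 + N 1 1) = 0 := by linear_combination h01
      linear_combination (mul_eq_zero.mp this).resolve_left hb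
    have hc : -(N 0 0 ^ 2 / N 0 1) = N 1 0 := by
      field_simp
      linear_combination -h00
    ext i j; fin_cases i <;> fin_cases j <;> simp [sqZeroParam, hd, hc]

theorem card_fin_two_sq_eq_zero_le [Fintype F] :
    Nat.card {N : Matrix (Fin 2) (Fin 2) F // N ^ 2 = 0} ≤ Fintype.card F ^ 2 := by
  classical
  have hinj : Function.Injective fun N : {N : Matrix (Fin 2) (Fin 2) F // N ^ 2 = 0} =>
      (exists_sqZeroParam_eq N.2).choose := fun N M hNM => Subtype.ext <| by
    rw [← (exists_sqZeroParam_eq N.2).choose_spec, ← (exists_sqZeroParam_eq M.2).choose_spec]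
    exact congrArg sqZeroParam hNM
  refine (Nat.card_le_card_of_injective _ hinj).trans_eq ?_
  have : 1 ≤ Fintype.card F := Fintype.card_pos
  rw [Nat.card_eq_fintype_card, Fintype.card_sum, Fintype.card_prod, Fintype.card_units]
  zify [this]
  ring

namespace GeneralLinearGroup

theorem pow_char_eq_one_iff_sq_sub_one_eq_zero {p : ℕ} [Fact p.Prime] [CharP F p]
    (g : GL (Fin 2) F) : g ^ p = 1 ↔ (g.val - 1) ^ 2 = 0 := by
  have hp : p.Prime := Fact.out
  have hfrob := sub_pow_char_of_commute p (Commute.one_right g.val)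
  rw [one_pow] at hfrob
  rw [Units.ext_iff, Units.val_pow_eq_pow_val, Units.val_one, ← sub_eq_zero, ← hfrob]
  exact ⟨fun h => by simpa using pow_card_eq_zero_of_isNilpotent ⟨p, h⟩,
    fun h => pow_eq_zero_of_le hp.two_le h⟩

theorem card_pow_char_eq_one_le [Fintype F] {p : ℕ} [Fact p.Prime] [CharP F p] :
    Nat.card {g : GL (Fin 2) F // g ^ p = 1} ≤ Fintype.card F ^ 2 := by
  refine le_trans (Nat.card_le_card_of_injective
    (fun g => ⟨g.1.val - 1, (pow_char_eq_one_iff_sq_sub_one_eq_zero g.1).mp g.2⟩)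
    fun g h e => ?_) card_fin_two_sq_eq_zero_le
  exact Subtype.ext (Units.ext (sub_left_injective (congrArg Subtype.val e)))

theorem not_sq_dvd_card_fin_two_zmod {p : ℕ} (hp : p.Prime) :
    ¬ p ^ 2 ∣ Nat.card (GL (Fin 2) (ZMod p)) := by
  have : Fact p.Prime := ⟨hp⟩
  have hcard : Nat.card (GL (Fin 2) (ZMod p)) = p * ((p ^ 2 - 1) * (p - 1)) := by
    simp only [card_GL_field, ZMod.card, Fin.prod_univ_two, Fin.val_zero, Fin.val_one, pow_zero,
      pow_one]
    rw [mul_left_comm, Nat.mul_sub_one, ← sq]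
  rw [pow_two, hcard, Nat.mul_dvd_mul_iff_left hp.pos, hp.dvd_mul, not_or]
  exact ⟨Nat.not_dvd_pow_sub_one hp.one_lt two_ne_zero,
    by simpa using Nat.not_dvd_pow_sub_one hp.one_lt one_ne_zero⟩

def upperUnitriangular (t : F) : GL (Fin 2) F := .mkOfDetNeZero !![1, t; 0, 1] (by simp)

def lowerUnitriangular (t : F) : GL (Fin 2) F := .mkOfDetNeZero !![1, 0; t, 1] (by simp)

theorem sq_upperUnitriangular_sub_one (t : F) : ((upperUnitriangular t).val - 1) ^ 2 = 0 := by
  ext i j; fin_cases i <;> fin_cases j <;> simp [upperUnitriangular, sq, mul_apply, one_fin_two]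

theorem sq_lowerUnitriangular_sub_one (t : F) : ((lowerUnitriangular t).val - 1) ^ 2 = 0 := by
  ext i j; fin_cases i <;> fin_cases j <;> simp [lowerUnitriangular, sq, mul_apply, one_fin_two]

theorem eq_upper_mul_lower_mul_upper {g : GL (Fin 2) F} (hdet : g.val.det = 1)
    (hc : g.val 1 0 ≠ 0) :
    g = upperUnitriangular ((g.val 0 0 - 1) / g.val 1 0) * lowerUnitriangular (g.val 1 0) *
      upperUnitriangular ((g.val 1 1 - 1) / g.val 1 0) := by
  rw [det_fin_two] at hdet
  refine Units.ext ((eta_fin_two g.val).trans ?_)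
  simp only [upperUnitriangular, lowerUnitriangular, Units.val_mul, val_mkOfDetNeZero, mul_fin_two]
  congr 5 <;> field_simp
  · ring
  · linear_combination -hdet
  · ring
  · ring

theorem mem_of_det_eq_one {H : Subgroup (GL (Fin 2) F)} (hu : ∀ t, upperUnitriangular t ∈ H)
    (hl : ∀ t, lowerUnitriangular t ∈ H) {g : GL (Fin 2) F} (hdet : g.val.det = 1) : g ∈ H := by
  have hmem {g : GL (Fin 2) F} (hdet : g.val.det = 1) (hc : g.val 1 0 ≠ 0) : g ∈ H := by
    rw [eq_upper_mul_lower_mul_upper hdet hc]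
    exact H.mul_mem (H.mul_mem (hu _) (hl _)) (hu _)
  by_cases hc : g.val 1 0 = 0
  · have hd : g.val 1 1 ≠ 0 := fun hd => by simp [det_fin_two, hc, hd] at hdet
    have hg' : g * lowerUnitriangular 1 ∈ H := hmem (by simp [hdet, lowerUnitriangular])
      (by simpa [lowerUnitriangular, mul_apply, Fin.sum_univ_two, hc] using hd)
    simpa using H.mul_mem hg' (H.inv_mem (hl 1))
  · exact hmem hdet hc

end GeneralLinearGroup

end Matrix

open Matrix.GeneralLinearGroup in
/-- Let `H ⊆ GL₂(𝔽_p)` be a subgroup of order divisible by `p`, and let `H_p`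
be a Sylow `p`-subgroup of `H`.  Then either `H_p` is normal in `H`, or `H`
contains (the image in `GL₂(𝔽_p)` of) `SL₂(𝔽_p)`, i.e. every invertible
matrix of determinant `1`. -/
theorem sylow_normal_or_contains_SL2 (p : ℕ) (hp : p.Prime)
    (H : Subgroup (GL (Fin 2) (ZMod p))) (hdvd : p ∣ Nat.card H)
    (Hp : Sylow p H) :
    (Hp : Subgroup H).Normal ∨
      ∀ g : GL (Fin 2) (ZMod p),
        (g : Matrix (Fin 2) (Fin 2) (ZMod p)).det = 1 → g ∈ H := by
  have : Fact p.Prime := ⟨hp⟩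
  refine or_iff_not_imp_left.mpr fun hnormal g hdet => ?_
  have hcard (P : Sylow p H) : Nat.card P = p := P.card_eq_of_dvd_of_not_sq_dvd hdvd
    fun h => not_sq_dvd_card_fin_two_zmod hp (h.trans H.card_subgroup_dvd_card)
  have hunipotent (g : GL (Fin 2) (ZMod p)) : g ^ p = 1 → g ∈ H := H.mem_of_card_pow_eq_one_le <|
    calc Nat.card {g : GL (Fin 2) (ZMod p) // g ^ p = 1}
        _ ≤ p ^ 2 := by simpa using card_pow_char_eq_one_le (F := ZMod p) (p := p)
        _ = (p + 1) * (p - 1) + 1 := by zify [hp.one_le]; ring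
        _ ≤ Nat.card (Sylow p H) * (p - 1) + 1 := by
          gcongr; exact Hp.add_one_le_card_of_not_normal hnormal
        _ ≤ Nat.card {h : H // h ^ p = 1} := Sylow.card_mul_pred_add_one_le_card_pow_eq_one hcard
  exact mem_of_det_eq_one
    (fun t => hunipotent _ <| (pow_char_eq_one_iff_sq_sub_one_eq_zero _).mpr
      (sq_upperUnitriangular_sub_one t))
    (fun t => hunipotent _ <| (pow_char_eq_one_iff_sq_sub_one_eq_zero _).mpr
      (sq_lowerUnitriangular_sub_one t)) hdet
end

section
/- Let p be a prime and let H be a subgroup of GL₂(𝔽_p). Let H⁺ denote the subgroup of H generated by the set {x ∈ H : x^p = 1}. Then exactly one of the following holds: H⁺ is the trivial subgroup; H⁺ is conjugate in GL₂(𝔽_p) to the subgroup U of all upper unitriangular matrices [[1,a],[0,1]], a ∈ 𝔽_p; or H⁺ equals SL₂(𝔽_p) (the image of SL₂(𝔽_p) in GL₂(𝔽_p)). In particular, at least one of these three alternatives always holds. -/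
open Matrix

namespace HplusAux

variable {p : ℕ} [Fact p.Prime]

local notation "F" => ZMod p
local notation "M2" => Matrix (Fin 2) (Fin 2) (ZMod p)


-- Cayley-Hamilton for 2x2
lemma cayley2 (A : M2) : A * A = (A 0 0 + A 1 1) • A - (A.det) • (1 : M2) := by
  ext i j
  fin_cases i <;> fin_cases j <;>
    simp [Matrix.mul_apply, Fin.sum_univ_two, Matrix.det_fin_two] <;> ring

lemma sq_zero_of_pow_p {A : M2} (hA : A ^ p = 0) : A * A = 0 := by
  have hp := (Fact.out : p.Prime)
  have hdet : A.det = 0 := by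
    have : A.det ^ p = 0 := by rw [← Matrix.det_pow, hA]; simp [Matrix.det_fin_two]
    exact pow_eq_zero_iff hp.ne_zero |>.mp this
  have hCH : A * A = (A 0 0 + A 1 1) • A := by rw [cayley2, hdet]; simp
  set t := A 0 0 + A 1 1 with ht
  have hpow : ∀ n : ℕ, A ^ (n + 1) = t ^ n • A := by
    intro n
    induction n with
    | zero => simp
    | succ n ih =>
      rw [pow_succ, ih, smul_mul_assoc, hCH, smul_smul, ← pow_succ]
  have h1 : t ^ (p - 1) • A = 0 := by
    have := hpow (p - 1)
    rw [Nat.sub_add_cancel hp.one_lt.le] at this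
    rw [← this, hA]
  by_cases htz : t = 0
  · rw [hCH, htz]; simp
  · have : A = 0 := by
      have hne : t ^ (p - 1) ≠ 0 := pow_ne_zero _ htz
      have := smul_eq_zero.mp h1
      tauto
    rw [this]; simp

lemma unip_sq_zero {x : GL (Fin 2) F} (hx : x ^ p = 1) :
    ((x : M2) - 1) * ((x : M2) - 1) = 0 := by
  apply sq_zero_of_pow_p
  have hcomm : Commute (x : M2) (1 : M2) := Commute.one_right _
  have := sub_pow_char_of_commute hcomm (p := p)
  rw [this, one_pow]
  have : ((x : M2)) ^ p = 1 := by
    have := congrArg (Units.val) hx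
    simpa using this
  rw [this, sub_self]

lemma unip_det_one {x : GL (Fin 2) F} (hx : x ^ p = 1) : (x : M2).det = 1 := by
  have hp := (Fact.out : p.Prime)
  have hxp : ((x : M2)) ^ p = 1 := by
    have := congrArg (Units.val) hx; simpa using this
  have hdp : (x : M2).det ^ p = 1 := by rw [← Matrix.det_pow, hxp, Matrix.det_one]
  have hne : (x : M2).det ≠ 0 := by
    intro h
    have : IsUnit (x : M2).det := (Matrix.isUnit_iff_isUnit_det _).mp x.isUnit
    rw [h] at this; exact this.ne_zero rfl  -- field
  have hd1 : (x : M2).det ^ (p - 1) = 1 := ZMod.pow_card_sub_one_eq_one hne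
  have : (x : M2).det ^ (p - 1) * (x : M2).det = 1 := by
    rw [← pow_succ, Nat.sub_add_cancel hp.one_lt.le, hdp]
  rwa [hd1, one_mul] at this

/-- upper unitriangular unit -/
def uT (s : F) : GL (Fin 2) F :=
  ⟨!![1, s; 0, 1], !![1, -s; 0, 1], by ext i j; fin_cases i <;> fin_cases j <;>
    simp [Matrix.mul_apply, Fin.sum_univ_two], by ext i j; fin_cases i <;> fin_cases j <;>
    simp [Matrix.mul_apply, Fin.sum_univ_two]⟩

/-- lower unitriangular unit -/
def lT (t : F) : GL (Fin 2) F :=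
  ⟨!![1, 0; t, 1], !![1, 0; -t, 1], by ext i j; fin_cases i <;> fin_cases j <;>
    simp [Matrix.mul_apply, Fin.sum_univ_two], by ext i j; fin_cases i <;> fin_cases j <;>
    simp [Matrix.mul_apply, Fin.sum_univ_two]⟩

@[simp] lemma uT_val (s : F) : ((uT s : GL (Fin 2) F) : M2) = !![1, s; 0, 1] := rfl
@[simp] lemma uT_inv_val (s : F) : (((uT s)⁻¹ : GL (Fin 2) F) : M2) = !![1, -s; 0, 1] := rfl
@[simp] lemma lT_val (t : F) : ((lT t : GL (Fin 2) F) : M2) = !![1, 0; t, 1] := rfl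
@[simp] lemma lT_inv_val (t : F) : (((lT t)⁻¹ : GL (Fin 2) F) : M2) = !![1, 0; -t, 1] := rfl

/-- Normalization: nonzero square-zero 2×2 matrix is conjugate to E12. -/
lemma conj_to_E12 {N : M2} (h2 : N * N = 0) (h0 : N ≠ 0) :
    ∃ g : GL (Fin 2) F, ((g⁻¹ : GL (Fin 2) F) : M2) * N * (g : M2) = !![0,1;0,0] := by
  have e00 : N 0 0 * N 0 0 + N 0 1 * N 1 0 = 0 := by
    have := congrFun (congrFun h2 0) 0
    simpa [Matrix.mul_apply, Fin.sum_univ_two] using this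
  have e01 : N 0 0 * N 0 1 + N 0 1 * N 1 1 = 0 := by
    have := congrFun (congrFun h2 0) 1
    simpa [Matrix.mul_apply, Fin.sum_univ_two] using this
  have e10 : N 1 0 * N 0 0 + N 1 1 * N 1 0 = 0 := by
    have := congrFun (congrFun h2 1) 0
    simpa [Matrix.mul_apply, Fin.sum_univ_two] using this
  have e11 : N 1 0 * N 0 1 + N 1 1 * N 1 1 = 0 := by
    have := congrFun (congrFun h2 1) 1
    simpa [Matrix.mul_apply, Fin.sum_univ_two] using this
  -- choose G with det ≠ 0 and N * G = G * E12
  obtain ⟨G, hdet, hNG⟩ : ∃ G : M2, G.det ≠ 0 ∧ N * G = G * !![0,1;0,0] := by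
    by_cases hc : N 0 0 = 0 ∧ N 1 0 = 0
    · -- first column zero; use G = !![N 0 1, 0; N 1 1, 1]
      obtain ⟨hA, hC⟩ := hc
      have h11 : N 1 1 = 0 := by
        have : N 1 1 * N 1 1 = 0 := by rw [hC] at e11; simpa using e11
        exact mul_self_eq_zero.mp this
      have h01 : N 0 1 ≠ 0 := by
        intro h
        apply h0
        ext i j; fin_cases i <;> fin_cases j <;> simp [hA, hC, h11, h]
      refine ⟨!![N 0 1, 0; N 1 1, 1], ?_, ?_⟩
      · simp [Matrix.det_fin_two, h11, h01]
      · ext i j; fin_cases i <;> fin_cases j <;>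
          simp [Matrix.mul_apply, Fin.sum_univ_two, hA, hC, h11] <;> ring
    · -- first column nonzero; w = e1, v = col 1
      have h10 : N 1 0 ≠ 0 := by
        intro h
        rcases not_and_or.mp hc with h00 | h10'
        · apply h00
          have : N 0 0 * N 0 0 = 0 := by rw [h] at e00; simpa using e00
          exact mul_self_eq_zero.mp this
        · exact h10' h
      refine ⟨!![N 0 0, 1; N 1 0, 0], ?_, ?_⟩
      · simp [Matrix.det_fin_two, h10]
      · ext i j; fin_cases i <;> fin_cases j <;>
          simp [Matrix.mul_apply, Fin.sum_univ_two]
        · linear_combination e00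
        · linear_combination e10
  have hG : IsUnit G := (Matrix.isUnit_iff_isUnit_det G).mpr (Ne.isUnit hdet)
  refine ⟨hG.unit, ?_⟩
  have hval : ((hG.unit : GL (Fin 2) F) : M2) = G := hG.unit_spec
  calc ((hG.unit⁻¹ : GL (Fin 2) F) : M2) * N * (hG.unit : M2)
      = ((hG.unit⁻¹ : GL (Fin 2) F) : M2) * (N * G) := by rw [hval, mul_assoc]
    _ = ((hG.unit⁻¹ : GL (Fin 2) F) : M2) * (((hG.unit : GL (Fin 2) F) : M2) * !![0,1;0,0]) := by
        rw [hNG, hval]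
    _ = (((hG.unit⁻¹ : GL (Fin 2) F) : M2) * ((hG.unit : GL (Fin 2) F) : M2)) * !![0,1;0,0] := by
        rw [mul_assoc]
    _ = !![0,1;0,0] := by rw [Units.inv_mul, one_mul]

/-- power of a unipotent element -/
lemma unip_pow_val {N : M2} (h2 : N * N = 0) {x : GL (Fin 2) F} (hx : (x : M2) = 1 + N)
    (n : ℕ) : ((x ^ n : GL (Fin 2) F) : M2) = 1 + (n : F) • N := by
  induction n with
  | zero => simp
  | succ n ih =>
    have : ((x ^ (n+1) : GL (Fin 2) F) : M2) = ((x ^ n : GL (Fin 2) F) : M2) * (x : M2) := by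
      rw [pow_succ]; rfl
    rw [this, ih, hx]
    have expand : ((1 : M2) + (n:F) • N) * (1 + N) = 1 + ((n:F)+1) • N := by
      rw [mul_add, mul_one, add_mul, one_mul, smul_mul_assoc, h2, smul_zero, add_zero,
        add_smul, one_smul]
      abel
    rw [expand]
    push_cast
    ring_nf

/-- all elements with val `1 + c • N` are powers of `x` -/
lemma mem_of_unip_pow {K : Subgroup (GL (Fin 2) F)} {N : M2} (h2 : N * N = 0)
    {x : GL (Fin 2) F} (hx : (x : M2) = 1 + N) (hxK : x ∈ K)
    {z : GL (Fin 2) F} {c : F} (hz : (z : M2) = 1 + c • N) : z ∈ K := by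
  have : z = x ^ (c.val) := by
    apply Units.ext
    rw [unip_pow_val h2 hx, hz]
    congr 1
    rw [ZMod.natCast_val, ZMod.cast_id]
  rw [this]
  exact pow_mem hxK _

/-- Generation of SL2 from elementary subgroups -/
lemma mem_of_det_one {K : Subgroup (GL (Fin 2) F)}
    (hu : ∀ s : F, ∀ z : GL (Fin 2) F, (z : M2) = !![1, s; 0, 1] → z ∈ K)
    (hl : ∀ t : F, ∀ z : GL (Fin 2) F, (z : M2) = !![1, 0; t, 1] → z ∈ K)
    {z : GL (Fin 2) F} (hdet : (z : M2).det = 1) : z ∈ K := by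
  have key : ∀ w : GL (Fin 2) F, (w : M2).det = 1 → (w : M2) 1 0 ≠ 0 → w ∈ K := by
    intro w hw hc
    obtain ⟨a, b, c, d, hAe⟩ : ∃ a b c d, (w : M2) = !![a, b; c, d] :=
      ⟨_, _, _, _, Matrix.eta_fin_two _⟩
    rw [hAe] at hw hc
    have hc' : c ≠ 0 := by simpa using hc
    have hdet2 : a * d - b * c = 1 := by rw [Matrix.det_fin_two_of] at hw; exact hw
    obtain ⟨z1, hz1⟩ : ∃ z1 : GL (Fin 2) F, (z1 : M2) = !![1, (a-1) * c⁻¹; 0, 1] :=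
      ⟨⟨!![1, (a-1)*c⁻¹; 0, 1], !![1, -((a-1)*c⁻¹); 0, 1],
        by ext i j; fin_cases i <;> fin_cases j <;> simp [Matrix.mul_apply, Fin.sum_univ_two],
        by ext i j; fin_cases i <;> fin_cases j <;> simp [Matrix.mul_apply, Fin.sum_univ_two]⟩, rfl⟩
    obtain ⟨z2, hz2⟩ : ∃ z2 : GL (Fin 2) F, (z2 : M2) = !![1, 0; c, 1] :=
      ⟨⟨!![1, 0; c, 1], !![1, 0; -c, 1],
        by ext i j; fin_cases i <;> fin_cases j <;> simp [Matrix.mul_apply, Fin.sum_univ_two],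
        by ext i j; fin_cases i <;> fin_cases j <;> simp [Matrix.mul_apply, Fin.sum_univ_two]⟩, rfl⟩
    obtain ⟨z3, hz3⟩ : ∃ z3 : GL (Fin 2) F, (z3 : M2) = !![1, (d-1) * c⁻¹; 0, 1] :=
      ⟨⟨!![1, (d-1)*c⁻¹; 0, 1], !![1, -((d-1)*c⁻¹); 0, 1],
        by ext i j; fin_cases i <;> fin_cases j <;> simp [Matrix.mul_apply, Fin.sum_univ_two],
        by ext i j; fin_cases i <;> fin_cases j <;> simp [Matrix.mul_apply, Fin.sum_univ_two]⟩, rfl⟩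
    have hw_eq : w = z1 * z2 * z3 := by
      apply Units.ext
      have : ((z1 * z2 * z3 : GL (Fin 2) F) : M2) = (z1 : M2) * (z2 : M2) * (z3 : M2) := rfl
      rw [this, hz1, hz2, hz3, hAe]
      ext i j
      fin_cases i <;> fin_cases j <;>
        simp [Matrix.mul_apply, Fin.sum_univ_two] <;>
        (try field_simp) <;>
        (first
          | ring1
          | linear_combination hdet2
          | linear_combination (-2 : F) * hdet2
          | linear_combination (2 : F) * hdet2
          | linear_combination -hdet2
          | linear_combination c * hdet2
          | linear_combination -c * hdet2)
    rw [hw_eq]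
    exact mul_mem (mul_mem (hu _ _ hz1) (hl _ _ hz2)) (hu _ _ hz3)
  by_cases hc : (z : M2) 1 0 ≠ 0
  · exact key z hdet hc
  · push_neg at hc
    -- z = (lT (-1)) * (lT 1 * z) with lower-left entry = z 0 0 ≠ 0
    obtain ⟨l1, hl1⟩ : ∃ l1 : GL (Fin 2) F, (l1 : M2) = !![1, 0; 1, 1] :=
      ⟨⟨!![1, 0; 1, 1], !![1, 0; -1, 1],
        by ext i j; fin_cases i <;> fin_cases j <;> simp [Matrix.mul_apply, Fin.sum_univ_two],
        by ext i j; fin_cases i <;> fin_cases j <;> simp [Matrix.mul_apply, Fin.sum_univ_two]⟩, rfl⟩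
    have ha : (z : M2) 0 0 ≠ 0 := by
      intro h
      have : (z : M2).det = 0 := by
        rw [Matrix.det_fin_two, h, hc]; ring
      rw [hdet] at this; exact one_ne_zero this
    have hval : ((l1 * z : GL (Fin 2) F) : M2) = (l1 : M2) * (z : M2) := rfl
    have h10 : ((l1 * z : GL (Fin 2) F) : M2) 1 0 ≠ 0 := by
      rw [hval, hl1]
      simpa [Matrix.mul_apply, Fin.sum_univ_two, hc] using ha
    have hdet' : ((l1 * z : GL (Fin 2) F) : M2).det = 1 := by
      rw [hval, Matrix.det_mul, hl1, hdet]
      simp [Matrix.det_fin_two]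
    have hmem : l1 * z ∈ K := key _ hdet' h10
    have : z = l1⁻¹ * (l1 * z) := by group
    rw [this]
    exact mul_mem (inv_mem (hl 1 _ hl1)) hmem

@[simp] lemma uT_mul (a b : F) : uT a * uT b = uT (a + b) := by
  apply Units.ext
  show (!![1, a; 0, 1] : M2) * !![1, b; 0, 1] = !![1, a + b; 0, 1]
  ext i j; fin_cases i <;> fin_cases j <;>
    simp [Matrix.mul_apply, Fin.sum_univ_two, add_comm]

lemma uT_zero : uT (0 : F) = 1 := by
  apply Units.ext
  show (!![1, 0; 0, 1] : M2) = 1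
  ext i j; fin_cases i <;> fin_cases j <;> simp [Matrix.one_apply]

lemma uT_inv (a : F) : (uT a)⁻¹ = uT (-a) := by
  apply Units.ext
  rfl

/-- the subgroup of upper unitriangular units -/
def Uform : Subgroup (GL (Fin 2) F) where
  carrier := Set.range (uT : F → GL (Fin 2) F)
  one_mem' := ⟨0, uT_zero⟩
  mul_mem' := by rintro x y ⟨a, rfl⟩ ⟨b, rfl⟩; exact ⟨a + b, (uT_mul a b).symm⟩
  inv_mem' := by rintro x ⟨a, rfl⟩; exact ⟨-a, (uT_inv a).symm⟩

/-- the `U` of the statement -/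
def Ugrp : Subgroup (GL (Fin 2) F) :=
  Subgroup.closure {x : GL (Fin 2) F | ∃ a : F, (x : M2) = !![1, a; 0, 1]}

lemma Ugrp_le_Uform : (Ugrp : Subgroup (GL (Fin 2) F)) ≤ Uform := by
  rw [Ugrp, Subgroup.closure_le]
  rintro x ⟨a, ha⟩
  exact ⟨a, Units.ext ha.symm⟩

lemma uT_mem_Ugrp (a : F) : uT a ∈ (Ugrp : Subgroup (GL (Fin 2) F)) :=
  Subgroup.subset_closure ⟨a, rfl⟩

/-- any two elements of a conjugate of `U` commute -/
lemma conjU_comm (g : GL (Fin 2) F) {x y : GL (Fin 2) F}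
    (hx : x ∈ Subgroup.map (MulAut.conj g).toMonoidHom (Ugrp : Subgroup (GL (Fin 2) F)))
    (hy : y ∈ Subgroup.map (MulAut.conj g).toMonoidHom (Ugrp : Subgroup (GL (Fin 2) F))) :
    x * y = y * x := by
  obtain ⟨u, hu, rfl⟩ := hx
  obtain ⟨v, hv, rfl⟩ := hy
  obtain ⟨a, rfl⟩ := Ugrp_le_Uform hu
  obtain ⟨b, rfl⟩ := Ugrp_le_Uform hv
  rw [← _root_.map_mul, ← _root_.map_mul, uT_mul, uT_mul, add_comm]

lemma mem_range_toGL {z : GL (Fin 2) F} (h : (z : M2).det = 1) :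
    z ∈ (Matrix.SpecialLinearGroup.toGL :
      Matrix.SpecialLinearGroup (Fin 2) F →* GL (Fin 2) F).range :=
  ⟨⟨(z : M2), h⟩, Units.ext rfl⟩

lemma det_of_mem_range {z : GL (Fin 2) F}
    (h : z ∈ (Matrix.SpecialLinearGroup.toGL :
      Matrix.SpecialLinearGroup (Fin 2) F →* GL (Fin 2) F).range) :
    (z : M2).det = 1 := by
  obtain ⟨A, rfl⟩ := h
  exact A.prop

lemma lT_one_mem_range : (lT 1 : GL (Fin 2) F) ∈
    (Matrix.SpecialLinearGroup.toGL :
      Matrix.SpecialLinearGroup (Fin 2) F →* GL (Fin 2) F).range := by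
  apply mem_range_toGL
  simp [Matrix.det_fin_two]

lemma uT_one_mem_range : (uT 1 : GL (Fin 2) F) ∈
    (Matrix.SpecialLinearGroup.toGL :
      Matrix.SpecialLinearGroup (Fin 2) F →* GL (Fin 2) F).range := by
  apply mem_range_toGL
  simp [Matrix.det_fin_two]

lemma lT_uT_ne : (lT 1 : GL (Fin 2) F) * uT 1 ≠ uT 1 * lT 1 := by
  intro h
  have hm := congrArg (Units.val) h
  simp only [Units.val_mul, lT_val, uT_val] at hm
  have := congrFun (congrFun hm 0) 0
  simp [Matrix.mul_apply, Fin.sum_univ_two] at this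

lemma uT_one_ne_one : (uT 1 : GL (Fin 2) F) ≠ 1 := by
  intro h
  have := congrArg (fun z : GL (Fin 2) F => (z : M2) 0 1) h
  simp [Matrix.one_apply] at this

lemma lT_one_ne_one : (lT 1 : GL (Fin 2) F) ≠ 1 := by
  intro h
  have := congrArg (fun z : GL (Fin 2) F => (z : M2) 1 0) h
  simp [Matrix.one_apply] at this

lemma range_ne_conjU (g : GL (Fin 2) F) :
    (Matrix.SpecialLinearGroup.toGL :
      Matrix.SpecialLinearGroup (Fin 2) F →* GL (Fin 2) F).range ≠
      Subgroup.map (MulAut.conj g).toMonoidHom (Ugrp : Subgroup (GL (Fin 2) F)) := by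
  intro h
  apply lT_uT_ne (p := p)
  exact conjU_comm g (h ▸ lT_one_mem_range) (h ▸ uT_one_mem_range)

lemma bot_ne_conjU (g : GL (Fin 2) F) :
    (⊥ : Subgroup (GL (Fin 2) F)) ≠
      Subgroup.map (MulAut.conj g).toMonoidHom (Ugrp : Subgroup (GL (Fin 2) F)) := by
  intro h
  have : (MulAut.conj g).toMonoidHom (uT 1) ∈ (⊥ : Subgroup (GL (Fin 2) F)) := by
    rw [h]; exact ⟨uT 1, uT_mem_Ugrp 1, rfl⟩
  rw [Subgroup.mem_bot] at this
  have h1 : (uT 1 : GL (Fin 2) F) = 1 :=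
    (MulAut.conj g).injective (by simpa using this)
  exact uT_one_ne_one h1

lemma bot_ne_range :
    (⊥ : Subgroup (GL (Fin 2) F)) ≠
      (Matrix.SpecialLinearGroup.toGL :
        Matrix.SpecialLinearGroup (Fin 2) F →* GL (Fin 2) F).range := by
  intro h
  have : (lT 1 : GL (Fin 2) F) ∈ (⊥ : Subgroup (GL (Fin 2) F)) := h ▸ lT_one_mem_range
  rw [Subgroup.mem_bot] at this
  exact lT_one_ne_one this

-- matrix identities
lemma upper_eq (s : F) : (!![1, s; 0, 1] : M2) = 1 + s • !![0,1;0,0] := by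
  ext i j; fin_cases i <;> fin_cases j <;> simp [Matrix.one_apply]

lemma lower_eq (h t : F) : (!![1, 0; t * h, 1] : M2) = 1 + t • !![0,0;h,0] := by
  ext i j; fin_cases i <;> fin_cases j <;> simp [Matrix.one_apply, mul_comm]

lemma E12_sq : (!![0,1;0,0] : M2) * !![0,1;0,0] = 0 := by
  ext i j; fin_cases i <;> fin_cases j <;> simp [Matrix.mul_apply, Fin.sum_univ_two]

lemma E21h_sq (h : F) : (!![0,0;h,0] : M2) * !![0,0;h,0] = 0 := by
  ext i j; fin_cases i <;> fin_cases j <;> simp [Matrix.mul_apply, Fin.sum_univ_two]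

lemma sandwich (g : GL (Fin 2) F) (X : M2) :
    (g : M2) * (((g⁻¹ : GL (Fin 2) F) : M2) * X * (g : M2)) * ((g⁻¹ : GL (Fin 2) F) : M2)
      = X := by
  have h1 : (g : M2) * ((g⁻¹ : GL (Fin 2) F) : M2) = 1 := g.mul_inv
  simp only [← mul_assoc]
  rw [h1, one_mul, mul_assoc, h1, mul_one]

lemma sandwich' (g : GL (Fin 2) F) (X : M2) :
    ((g⁻¹ : GL (Fin 2) F) : M2) * ((g : M2) * X * ((g⁻¹ : GL (Fin 2) F) : M2)) * (g : M2)
      = X := by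
  have h1 : ((g⁻¹ : GL (Fin 2) F) : M2) * (g : M2) = 1 := g.inv_mul
  simp only [← mul_assoc]
  rw [h1, one_mul, mul_assoc, h1, mul_one]

lemma val_conj (g x : GL (Fin 2) F) :
    (((g⁻¹ : GL (Fin 2) F) * x * g : GL (Fin 2) F) : M2)
      = ((g⁻¹ : GL (Fin 2) F) : M2) * (x : M2) * (g : M2) := rfl

lemma conj_one_add (g : GL (Fin 2) F) (X : M2) :
    ((g⁻¹ : GL (Fin 2) F) : M2) * ((1 : M2) + X) * (g : M2)
      = 1 + ((g⁻¹ : GL (Fin 2) F) : M2) * X * (g : M2) := by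
  have h1 : ((g⁻¹ : GL (Fin 2) F) : M2) * (g : M2) = 1 := g.inv_mul
  rw [mul_add, mul_one, add_mul, h1]

lemma mul_inv_cancel_left' (g : GL (Fin 2) F) (X : M2) :
    (g : M2) * (((g⁻¹ : GL (Fin 2) F) : M2) * X) = X := by
  rw [← mul_assoc, g.mul_inv, one_mul]

lemma inv_mul_cancel_left' (g : GL (Fin 2) F) (X : M2) :
    ((g⁻¹ : GL (Fin 2) F) : M2) * ((g : M2) * X) = X := by
  rw [← mul_assoc, g.inv_mul, one_mul]

lemma conj_one_add' (g : GL (Fin 2) F) (X : M2) :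
    (g : M2) * ((1 : M2) + X) * ((g⁻¹ : GL (Fin 2) F) : M2)
      = 1 + (g : M2) * X * ((g⁻¹ : GL (Fin 2) F) : M2) := by
  rw [mul_add, mul_one, add_mul, g.mul_inv]

lemma val_conj' (g x : GL (Fin 2) F) :
    ((g * x * g⁻¹ : GL (Fin 2) F) : M2)
      = (g : M2) * (x : M2) * ((g⁻¹ : GL (Fin 2) F) : M2) := rfl

lemma one_add_eta (e f h1 i2 : F) :
    (1 : M2) + !![e, f; h1, i2] = !![1 + e, f; h1, 1 + i2] := by
  ext i j; fin_cases i <;> fin_cases j <;> simp [Matrix.one_apply]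

lemma fE12_eta (f : F) : (!![0, f; 0, 0] : M2) = f • !![0, 1; 0, 0] := by
  ext i j; fin_cases i <;> fin_cases j <;> simp

lemma lower_conj_calc {e f h1 i2 : F} (hh : h1 ≠ 0)
    (q00 : e * e + f * h1 = 0) (qsum : e + i2 = 0) :
    (!![1, -(e * h1⁻¹); 0, 1] : M2) * ((1 : M2) + !![e, f; h1, i2]) * !![1, e * h1⁻¹; 0, 1]
      = !![1, 0; h1, 1] := by
  rw [one_add_eta]
  ext i j
  fin_cases i <;> fin_cases j <;>
    simp [Matrix.mul_apply, Fin.sum_univ_two] <;>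
    (try field_simp) <;>
    (first
      | ring1
      | linear_combination qsum
      | linear_combination -qsum
      | linear_combination h1 * qsum
      | linear_combination -h1 * qsum
      | linear_combination q00
      | linear_combination -q00
      | linear_combination q00 - e * qsum
      | linear_combination -q00 + e * qsum
      | linear_combination q00 + e * qsum
      | linear_combination -q00 - e * qsum
      | linear_combination h1 * qsum - q00
      | linear_combination q00 - h1 * qsum)

end HplusAux

open HplusAux in
/-- The trichotomy for the unipotently generated part of a subgroup of
`GL₂(𝔽_p)`: if `H ⊆ GL₂(𝔽_p)` is a subgroup and `H⁺` is the subgroup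
generated by `{x ∈ H : x^p = 1}`, then exactly one of the following holds:
`H⁺` is trivial; `H⁺` is conjugate in `GL₂(𝔽_p)` to the subgroup `U` of all
upper unitriangular matrices; or `H⁺` equals the image of `SL₂(𝔽_p)` in
`GL₂(𝔽_p)`. -/
theorem Hplus_trichotomy (p : ℕ) (hp : p.Prime)
    (H : Subgroup (GL (Fin 2) (ZMod p))) :
    let Hplus : Subgroup (GL (Fin 2) (ZMod p)) :=
      Subgroup.closure {x : GL (Fin 2) (ZMod p) | x ∈ H ∧ x ^ p = 1}
    let U : Subgroup (GL (Fin 2) (ZMod p)) :=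
      Subgroup.closure {x : GL (Fin 2) (ZMod p) |
        ∃ a : ZMod p, (x : Matrix (Fin 2) (Fin 2) (ZMod p)) = !![1, a; 0, 1]}
    let S : Subgroup (GL (Fin 2) (ZMod p)) :=
      (Matrix.SpecialLinearGroup.toGL :
        Matrix.SpecialLinearGroup (Fin 2) (ZMod p) →* GL (Fin 2) (ZMod p)).range
    let A : Prop := Hplus = ⊥
    let B : Prop := ∃ g : GL (Fin 2) (ZMod p),
      Hplus = Subgroup.map (MulAut.conj g).toMonoidHom U
    let C : Prop := Hplus = S
    (A ∧ ¬B ∧ ¬C) ∨ (B ∧ ¬A ∧ ¬C) ∨ (C ∧ ¬A ∧ ¬B) := by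
  haveI : Fact p.Prime := ⟨hp⟩
  intro Hplus U Sg PA PB PC
  have hU : U = (Ugrp : Subgroup (GL (Fin 2) (ZMod p))) := rfl
  set P : Set (GL (Fin 2) (ZMod p)) := {x | x ∈ H ∧ x ^ p = 1} with hPdef
  have hHP : Hplus = Subgroup.closure P := rfl
  by_cases hA : ∀ x ∈ P, x = 1
  · -- trivial case
    have hbot : Hplus = ⊥ := by
      rw [hHP]
      refine le_antisymm ((Subgroup.closure_le _).mpr ?_) bot_le
      intro x hx
      simp only [SetLike.mem_coe, Subgroup.mem_bot]
      exact hA x hx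
    refine Or.inl ⟨hbot, ?_, ?_⟩
    · rintro ⟨g, hg⟩
      rw [hbot] at hg
      exact bot_ne_conjU g (hU ▸ hg)
    · intro hC
      have hC' : Hplus = Sg := hC
      rw [hbot] at hC'
      exact bot_ne_range hC'
  · -- there is a nontrivial unipotent x₀
    push_neg at hA
    obtain ⟨x₀, hx₀P, hx₀ne⟩ := hA
    set N : Matrix (Fin 2) (Fin 2) (ZMod p) := (x₀ : Matrix (Fin 2) (Fin 2) (ZMod p)) - 1
      with hNdef
    have hN2 : N * N = 0 := unip_sq_zero hx₀P.2
    have hNne : N ≠ 0 := by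
      intro hh
      apply hx₀ne
      apply Units.ext
      have : (x₀ : Matrix (Fin 2) (Fin 2) (ZMod p)) - 1 = 0 := hh
      rw [sub_eq_zero] at this
      simpa using this
    have hx₀val : (x₀ : Matrix (Fin 2) (Fin 2) (ZMod p)) = 1 + N := by
      rw [hNdef]; abel
    obtain ⟨g, hgNg⟩ := conj_to_E12 hN2 hNne
    have hgN : (g : Matrix (Fin 2) (Fin 2) (ZMod p)) * !![0,1;0,0] *
        ((g⁻¹ : GL (Fin 2) (ZMod p)) : Matrix (Fin 2) (Fin 2) (ZMod p)) = N := by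
      rw [← hgNg]; exact sandwich g N
    have hx₀mem : x₀ ∈ Hplus := Subgroup.subset_closure hx₀P
    by_cases hB : ∀ y ∈ P, ∃ c : ZMod p,
        (y : Matrix (Fin 2) (Fin 2) (ZMod p)) = 1 + c • N
    · -- conjugate of U
      have hBeq : Hplus = Subgroup.map (MulAut.conj g).toMonoidHom U := by
        apply le_antisymm
        · rw [hHP]
          apply (Subgroup.closure_le _).mpr
          intro x hx
          obtain ⟨c, hc⟩ := hB x hx
          refine ⟨g⁻¹ * x * g, ?_, ?_⟩
          · apply Subgroup.subset_closure
            refine ⟨c, ?_⟩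
            rw [val_conj, hc, conj_one_add, Matrix.mul_smul, Matrix.smul_mul, hgNg,
              upper_eq]
          · simp only [MulEquiv.coe_toMonoidHom, MulAut.conj_apply]
            group
        · rw [hU, Ugrp, MonoidHom.map_closure]
          apply (Subgroup.closure_le _).mpr
          rintro z ⟨u, ⟨a, hu⟩, rfl⟩
          simp only [MulEquiv.coe_toMonoidHom, MulAut.conj_apply]
          apply mem_of_unip_pow hN2 hx₀val hx₀mem (c := a)
          rw [val_conj', hu, upper_eq, conj_one_add', Matrix.mul_smul, Matrix.smul_mul, hgN]
      refine Or.inr (Or.inl ⟨⟨g, hBeq⟩, ?_, ?_⟩)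
      · intro hC
        have hC' : Hplus = ⊥ := hC
        rw [hC'] at hx₀mem
        exact hx₀ne (Subgroup.mem_bot.mp hx₀mem)
      · intro hC
        have hC' : Hplus = Sg := hC
        have h2 : Sg = Subgroup.map (MulAut.conj g).toMonoidHom
            (Ugrp : Subgroup (GL (Fin 2) (ZMod p))) := by
          rw [← hU, ← hBeq]; exact hC'.symm
        exact range_ne_conjU g h2
    · -- SL₂ case
      push_neg at hB
      obtain ⟨y, hyP, hy⟩ := hB
      set M : Matrix (Fin 2) (Fin 2) (ZMod p) := (y : Matrix (Fin 2) (Fin 2) (ZMod p)) - 1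
        with hMdef
      have hM2 : M * M = 0 := unip_sq_zero hyP.2
      have hyval : (y : Matrix (Fin 2) (Fin 2) (ZMod p)) = 1 + M := by rw [hMdef]; abel
      have hMne : ∀ c : ZMod p, M ≠ c • N := by
        intro c hc
        exact hy c (by rw [hyval, hc])
      set M' : Matrix (Fin 2) (Fin 2) (ZMod p) :=
        ((g⁻¹ : GL (Fin 2) (ZMod p)) : Matrix (Fin 2) (Fin 2) (ZMod p)) * M *
          (g : Matrix (Fin 2) (Fin 2) (ZMod p)) with hM'def
      have hM'2 : M' * M' = 0 := by
        have : M' * M' = ((g⁻¹ : GL (Fin 2) (ZMod p)) : Matrix (Fin 2) (Fin 2) (ZMod p)) *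
            (M * M) * (g : Matrix (Fin 2) (Fin 2) (ZMod p)) := by
          rw [hM'def]
          simp only [mul_assoc]
          rw [mul_inv_cancel_left']
        rw [this, hM2, mul_zero, zero_mul]
      have hM'ne : ∀ c : ZMod p, M' ≠ c • !![0,1;0,0] := by
        intro c hc
        apply hMne c
        have hs : (g : Matrix (Fin 2) (Fin 2) (ZMod p)) * M' *
            ((g⁻¹ : GL (Fin 2) (ZMod p)) : Matrix (Fin 2) (Fin 2) (ZMod p)) = M :=
          sandwich g M
        rw [hc, Matrix.mul_smul, Matrix.smul_mul, hgN] at hs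
        exact hs.symm
      obtain ⟨e, f, h1, i2, hM'eta⟩ :
          ∃ e f h1 i2 : ZMod p, M' = !![e, f; h1, i2] :=
        ⟨_, _, _, _, Matrix.eta_fin_two M'⟩
      have q := hM'2
      rw [hM'eta] at q
      have q00 : e * e + f * h1 = 0 := by
        have := congrFun (congrFun q 0) 0
        simpa [Matrix.mul_apply, Fin.sum_univ_two] using this
      have q10 : h1 * e + i2 * h1 = 0 := by
        have := congrFun (congrFun q 1) 0
        simpa [Matrix.mul_apply, Fin.sum_univ_two, mul_comm] using this
      have q11 : h1 * f + i2 * i2 = 0 := by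
        have := congrFun (congrFun q 1) 1
        simpa [Matrix.mul_apply, Fin.sum_univ_two, mul_comm] using this
      have hh1 : h1 ≠ 0 := by
        intro hh
        apply hM'ne f
        have he : e = 0 := by
          have : e * e = 0 := by rw [hh] at q00; simpa using q00
          exact mul_self_eq_zero.mp this
        have hi : i2 = 0 := by
          have : i2 * i2 = 0 := by rw [hh] at q11; simpa using q11
          exact mul_self_eq_zero.mp this
        rw [hM'eta, he, hi, hh, fE12_eta]
      have qsum : e + i2 = 0 := by
        have : h1 * (e + i2) = 0 := by linear_combination q10
        rcases mul_eq_zero.mp this with h | h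
        · exact absurd h hh1
        · exact h
      -- the conjugated subgroup
      set K : Subgroup (GL (Fin 2) (ZMod p)) :=
        Subgroup.map (MulAut.conj g⁻¹).toMonoidHom Hplus with hKdef
      have hmemK : ∀ w : GL (Fin 2) (ZMod p), w ∈ Hplus → g⁻¹ * w * g ∈ K := by
        intro w hw
        exact ⟨w, hw, by simp [MulAut.conj_apply]⟩
      have hxu : g⁻¹ * x₀ * g ∈ K := hmemK x₀ hx₀mem
      have hxuval : ((g⁻¹ * x₀ * g : GL (Fin 2) (ZMod p)) :
          Matrix (Fin 2) (Fin 2) (ZMod p)) = 1 + !![0,1;0,0] := by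
        rw [val_conj, hx₀val, conj_one_add, hgNg]
      have hu_all : ∀ s : ZMod p, ∀ z : GL (Fin 2) (ZMod p),
          (z : Matrix (Fin 2) (Fin 2) (ZMod p)) = !![1, s; 0, 1] → z ∈ K := by
        intro s z hz
        exact mem_of_unip_pow E12_sq hxuval hxu (c := s) (by rw [hz, upper_eq])
      have hwy : g⁻¹ * y * g ∈ K := hmemK y (Subgroup.subset_closure hyP)
      have hwyval : ((g⁻¹ * y * g : GL (Fin 2) (ZMod p)) :
          Matrix (Fin 2) (Fin 2) (ZMod p)) = 1 + M' := by
        rw [val_conj, hyval, conj_one_add, ← hM'def]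
      -- conjugate down to a lower unitriangular element
      have hz2 : (uT (e * h1⁻¹))⁻¹ * (g⁻¹ * y * g) * uT (e * h1⁻¹) ∈ K :=
        mul_mem (mul_mem (inv_mem (hu_all _ _ rfl)) hwy) (hu_all _ _ rfl)
      have hz2val : (((uT (e * h1⁻¹))⁻¹ * (g⁻¹ * y * g) * uT (e * h1⁻¹) :
          GL (Fin 2) (ZMod p)) : Matrix (Fin 2) (Fin 2) (ZMod p)) = !![1, 0; h1, 1] := by
        have : (((uT (e * h1⁻¹))⁻¹ * (g⁻¹ * y * g) * uT (e * h1⁻¹) :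
            GL (Fin 2) (ZMod p)) : Matrix (Fin 2) (Fin 2) (ZMod p)) =
            !![1, -(e * h1⁻¹); 0, 1] * ((1 : Matrix (Fin 2) (Fin 2) (ZMod p)) + M') *
              !![1, e * h1⁻¹; 0, 1] := by
          rw [Units.val_mul, Units.val_mul, hwyval, uT_inv_val, uT_val]
        rw [this, hM'eta]
        exact lower_conj_calc hh1 q00 qsum
      have hz2' : (((uT (e * h1⁻¹))⁻¹ * (g⁻¹ * y * g) * uT (e * h1⁻¹) :
          GL (Fin 2) (ZMod p)) : Matrix (Fin 2) (Fin 2) (ZMod p)) = 1 + !![0,0;h1,0] := by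
        rw [hz2val]
        have := lower_eq h1 (1 : ZMod p)
        rw [one_mul, one_smul] at this
        exact this
      have hl_all : ∀ t : ZMod p, ∀ z : GL (Fin 2) (ZMod p),
          (z : Matrix (Fin 2) (Fin 2) (ZMod p)) = !![1, 0; t, 1] → z ∈ K := by
        intro t z hz
        apply mem_of_unip_pow (E21h_sq h1) hz2' hz2 (c := t * h1⁻¹)
        rw [hz, ← lower_eq]
        congr 1
        field_simp
      have hK_det : ∀ z : GL (Fin 2) (ZMod p),
          (z : Matrix (Fin 2) (Fin 2) (ZMod p)).det = 1 → z ∈ K :=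
        fun z hz => mem_of_det_one hu_all hl_all hz
      -- Hplus = S
      have hCeq : Hplus = Sg := by
        apply le_antisymm
        · rw [hHP]
          apply (Subgroup.closure_le _).mpr
          intro x hx
          exact mem_range_toGL (unip_det_one hx.2)
        · intro z hz
          have hdz : (z : Matrix (Fin 2) (Fin 2) (ZMod p)).det = 1 := det_of_mem_range hz
          have hgg : (((g⁻¹ : GL (Fin 2) (ZMod p)) :
              Matrix (Fin 2) (Fin 2) (ZMod p))).det *
              ((g : GL (Fin 2) (ZMod p)) : Matrix (Fin 2) (Fin 2) (ZMod p)).det = 1 := by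
            rw [← Matrix.det_mul, g.inv_mul, Matrix.det_one]
          have hdz' : ((g⁻¹ * z * g : GL (Fin 2) (ZMod p)) :
              Matrix (Fin 2) (Fin 2) (ZMod p)).det = 1 := by
            rw [val_conj, Matrix.det_mul, Matrix.det_mul]
            calc (((g⁻¹ : GL (Fin 2) (ZMod p)) : Matrix (Fin 2) (Fin 2) (ZMod p)).det *
                  (z : Matrix (Fin 2) (Fin 2) (ZMod p)).det) *
                  ((g : GL (Fin 2) (ZMod p)) : Matrix (Fin 2) (Fin 2) (ZMod p)).det
                = (((g⁻¹ : GL (Fin 2) (ZMod p)) :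
                    Matrix (Fin 2) (Fin 2) (ZMod p)).det *
                  ((g : GL (Fin 2) (ZMod p)) : Matrix (Fin 2) (Fin 2) (ZMod p)).det) *
                  (z : Matrix (Fin 2) (Fin 2) (ZMod p)).det := by ring
              _ = 1 := by rw [hgg, one_mul, hdz]
          obtain ⟨w, hwH, hweq⟩ := hK_det _ hdz'
          have hwz : w = z := by
            apply (MulAut.conj g⁻¹).injective
            have h2 : (MulAut.conj g⁻¹) z = g⁻¹ * z * g := by
              simp [MulAut.conj_apply]
            rw [h2]
            exact hweq
          rwa [← hwz]
      refine Or.inr (Or.inr ⟨hCeq, ?_, ?_⟩)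
      · intro hC
        have hC' : Hplus = ⊥ := hC
        rw [hC'] at hx₀mem
        exact hx₀ne (Subgroup.mem_bot.mp hx₀mem)
      · rintro ⟨g', hg'⟩
        have h2 : Sg = Subgroup.map (MulAut.conj g').toMonoidHom
            (Ugrp : Subgroup (GL (Fin 2) (ZMod p))) := by
          rw [← hU, ← hg']; exact hCeq.symm
        exact range_ne_conjU g' h2
end

section
/- Let p be a prime, n ≥ 1, and let 𝒢 be a finite subgroup of GL_n(𝔽_p) whose order is coprime to p. Then 𝒢 lifts to GL_n(ℤ_p): there exists a group homomorphism σ : 𝒢 → GL_n(ℤ_p) such that ρ ∘ σ is the inclusion of 𝒢 into GL_n(𝔽_p), where ρ : GL_n(ℤ_p) → GL_n(𝔽_p) is the reduction map induced by the canonical ring homomorphism ℤ_p → ℤ/pℤ applied entrywise. -/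
/-!
The reduction `GL_n(ℤ/p^{k+1}) → GL_n(ℤ/p^j)`, `1 ≤ j ≤ k+1`, is surjective because `ℤ/p^{k+1}`
is local, and its kernel is a `p`-group because `(1 + pC)^{p^k} = 1` modulo `p^{k+1}`. Since `|𝒢|`
is prime to `p`, Schur–Zassenhaus splits the pulled-back extension, so every homomorphism from `𝒢`
to `GL_n(ℤ/p^j)` lifts one level up. Lifting the inclusion of `𝒢` level by level gives compatible
homomorphisms `𝒢 → GL_n(ℤ/p^{k+1})`, whose matrix entries converge in `ℤ_p`.
-/

open Polynomial in
theorem one_add_mul_pow_pow_eq_one {R : Type*} [Ring R] {p k : ℕ} (hp : (p : R) ^ (k + 1) = 0)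
    (c : R) : (1 + p * c) ^ p ^ k = 1 := by
  -- `R` need not be commutative: work in `ℤ[X]` and specialise `X` to `c`.
  obtain ⟨q, hq⟩ := dvd_sub_pow_of_dvd_sub (k := k)
    (show (p : ℤ[X]) ∣ (1 + (p : ℤ[X]) * X) - 1 from ⟨X, by ring⟩)
  have := congrArg (aeval c) hq
  simp only [map_sub, map_pow, map_add, map_one, map_mul, map_natCast, aeval_X, one_pow] at this
  rwa [hp, zero_mul, sub_eq_zero] at this

theorem ZMod.natCast_dvd_of_castHom_eq_zero {m n : ℕ} (h : m ∣ n) {x : ZMod n}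
    (hx : ZMod.castHom h (ZMod m) x = 0) : (m : ZMod n) ∣ x := by
  obtain ⟨c, hc⟩ := (ZMod.intCast_zmod_eq_zero_iff_dvd _ _).mp
    (by rwa [← map_intCast (ZMod.castHom h (ZMod m)), ZMod.intCast_zmod_cast])
  exact ⟨c, by rw [← ZMod.intCast_zmod_cast x, hc]; push_cast; ring⟩

theorem MonoidHom.exists_lift_of_coprime_card_ker {G Γ Δ : Type*} [Group G] [Group Γ] [Group Δ]
    (f : Γ →* Δ) (hf : Function.Surjective f) (τ : G →* Δ)
    (hcop : (Nat.card f.ker).Coprime (Nat.card G)) : ∃ τ' : G →* Γ, f.comp τ' = τ := by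
  set H : Subgroup Γ := τ.range.comap f
  set φ : H →* τ.range := (f.domRestrict H).codRestrict τ.range fun h => h.2
  have hφ : Function.Surjective φ := fun r => by
    obtain ⟨γ, hγ⟩ := hf r
    exact ⟨⟨γ, by simp [H, hγ]⟩, Subtype.ext hγ⟩
  have hker : φ.ker = f.ker.subgroupOf H :=
    (MonoidHom.ker_codRestrict _ _ _).trans (MonoidHom.ker_domRestrict _ _)
  have hcard : Nat.card φ.ker = Nat.card f.ker := by
    rw [hker]
    exact Nat.card_congr (Subgroup.subgroupOfEquivOfLe fun γ hγ => by simp_all [H]).toEquiv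
  have hcop' : (Nat.card φ.ker).Coprime φ.ker.index := by
    rw [hcard, Subgroup.index_ker, MonoidHom.range_eq_top.mpr hφ, Subgroup.card_top]
    exact hcop.coprime_dvd_right (Subgroup.card_range_dvd τ)
  -- A Schur–Zassenhaus complement `K` of `ker φ` maps isomorphically onto `range τ`.
  obtain ⟨K, hK⟩ := Subgroup.exists_left_complement'_of_coprime hcop'
  set q := QuotientGroup.quotientKerEquivOfSurjective φ hφ
  let e : τ.range ≃* K := q.symm.trans hK.QuotientMulEquiv
  have he : ∀ r, φ (e r) = r := fun r =>
    calc φ (e r) = q (e r : H) := rfl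
      _ = q (q.symm r) := congrArg q (hK.quotientGroupMk_leftQuotientEquiv (q.symm r))
      _ = r := q.apply_symm_apply r
  refine ⟨H.subtype.comp (K.subtype.comp (e.toMonoidHom.comp τ.rangeRestrict)), ?_⟩
  ext g
  exact congrArg Subtype.val (he (τ.rangeRestrict g))

namespace PadicInt

variable {p : ℕ} [Fact p.Prime]

theorem ringHom_eq_toZMod (f : ℤ_[p] →+* ZMod p) : f = toZMod :=
  ZMod.ringHom_eq_of_ker_eq _ _ <| by
    rw [ker_toZMod]
    exact IsLocalRing.eq_maximalIdeal
      (RingHom.ker_isMaximal_of_surjective f (ZMod.ringHom_surjective f))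

theorem exists_toZModPow_succ_eq (x : ∀ k, ZMod (p ^ (k + 1)))
    (hx : ∀ k,
      ZMod.castHom (pow_dvd_pow p (k + 1).le_succ) (ZMod (p ^ (k + 1))) (x (k + 1)) = x k) :
    ∃ y : ℤ_[p], ∀ k, toZModPow (k + 1) y = x k := by
  have hval : ∀ k, (((x (k + 1)).val : ℤ) : ZMod (p ^ (k + 1))) = x k := fun k => by
    rw [← hx k, ZMod.castHom_apply, ZMod.cast_eq_val, Int.cast_natCast]
  have hdvd : ∀ k, (p : ℤ) ^ k ∣ ((x (k + 1)).val : ℤ) - (x k).val := fun k => by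
    refine (pow_dvd_pow _ k.le_succ).trans ?_
    rw [← Nat.cast_pow, ← ZMod.intCast_eq_intCast_iff_dvd_sub, hval k, Int.cast_natCast,
      ZMod.natCast_zmod_val]
  exact ⟨ofIntSeq _ (isCauSeq_padicNorm_of_pow_dvd_sub _ p hdvd), fun k =>
    (toZModPow_ofIntSeq_of_pow_dvd_sub (fun k => ((x k).val : ℤ)) p hdvd (k + 1)).trans
      (hval k)⟩

theorem ext_of_toZModPow_succ {x y : ℤ_[p]}
    (h : ∀ k, toZModPow (k + 1) x = toZModPow (k + 1) y) : x = y := by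
  refine ext_of_toZModPow.mp fun
    | 0 => ?_
    | k + 1 => h k
  have : Subsingleton (ZMod (p ^ 0)) := by rw [pow_zero]; infer_instance
  exact Subsingleton.elim _ _

end PadicInt

namespace Matrix.GeneralLinearGroup

variable {ι : Type*} [Fintype ι] [DecidableEq ι]

theorem map_surjective {R S : Type*} [CommRing R] [CommRing S] (f : R →+* S) [IsLocalHom f]
    (hf : Function.Surjective f) : Function.Surjective (map (n := ι) f) := by
  intro M
  set N : Matrix ι ι R := (M : Matrix ι ι S).map (Function.surjInv hf)
  have hN : N.map f = M := by
    ext i j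
    exact Function.surjInv_eq hf _
  have hdet : IsUnit N.det := by
    apply isUnit_of_map_unit f
    rw [RingHom.map_det, RingHom.mapMatrix_apply, hN]
    exact (isUnit_iff_isUnit_det _).mp M.isUnit
  obtain ⟨u, hu⟩ := (isUnit_iff_isUnit_det N).mpr hdet
  exact ⟨u, Units.ext (by simp [map, hu, hN])⟩

variable (ι) in
theorem isPGroup_ker_map_castHom (p k : ℕ) :
    IsPGroup p (map (n := ι) (ZMod.castHom (dvd_pow_self p k.succ_ne_zero) (ZMod p))).ker := by
  rintro ⟨g, hg⟩
  refine ⟨k, Subtype.ext (Units.ext ?_)⟩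
  set A : Matrix ι ι (ZMod (p ^ (k + 1))) := g.val
  have hA : (A - 1).map (ZMod.castHom (dvd_pow_self p k.succ_ne_zero) (ZMod p)) = 0 := by
    rw [Matrix.map_sub _ (map_sub _), Matrix.map_one _ (map_zero _) (map_one _), sub_eq_zero]
    exact congrArg Units.val hg
  choose C hC using fun i j =>
    ZMod.natCast_dvd_of_castHom_eq_zero (dvd_pow_self p k.succ_ne_zero) (congrFun₂ hA i j)
  have hp : (p : Matrix ι ι (ZMod (p ^ (k + 1)))) ^ (k + 1) = 0 := by
    rw [← Nat.cast_pow, ← map_natCast (algebraMap (ZMod (p ^ (k + 1))) _), ZMod.natCast_self,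
      map_zero]
  have hAC : A = 1 + p * of C := by
    rw [← sub_eq_iff_eq_add', ← nsmul_eq_mul]
    ext i j
    simp [hC]
  simpa [A, hAC] using one_add_mul_pow_pow_eq_one hp (of C)

theorem exists_lift_zmod_prime_pow {G : Type*} [Group G] {p : ℕ} [hp : Fact p.Prime]
    (hG : (Nat.card G).Coprime p) {d k : ℕ} (hpd : p ∣ d) (hd : d ∣ p ^ (k + 1))
    (τ : G →* GL ι (ZMod d)) :
    ∃ τ' : G →* GL ι (ZMod (p ^ (k + 1))),
      (map (ZMod.castHom hd (ZMod d))).comp τ' = τ := by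
  have : Nontrivial (ZMod d) := ZMod.nontrivial_iff.mpr fun h =>
    hp.out.ne_one (Nat.dvd_one.mp (h ▸ hpd))
  have : Nontrivial (ZMod (p ^ (k + 1))) :=
    ZMod.nontrivial_iff.mpr (Nat.one_lt_pow k.succ_ne_zero hp.out.one_lt).ne'
  have : IsLocalRing (ZMod (p ^ (k + 1))) :=
    .of_surjective' (PadicInt.toZModPow (k + 1)) (ZMod.ringHom_surjective _)
  set f := map (n := ι) (ZMod.castHom hd (ZMod d))
  have hker : IsPGroup p f.ker := by
    refine (isPGroup_ker_map_castHom ι p k).to_le fun g (hg : f g = 1) => ?_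
    rw [MonoidHom.mem_ker, ← ZMod.castHom_comp hpd hd, map_comp, MonoidHom.comp_apply, hg,
      map_one]
  obtain ⟨m, hm⟩ := IsPGroup.iff_card.mp hker
  exact f.exists_lift_of_coprime_card_ker (map_surjective _ (ZMod.ringHom_surjective _)) τ
    (hm ▸ Nat.Coprime.pow_left m hG.symm)

theorem exists_lift_padicInt_of_compatible {G : Type*} [Group G] {p : ℕ} [Fact p.Prime]
    (τ : ∀ k, G →* GL ι (ZMod (p ^ (k + 1))))
    (hτ : ∀ k, (map (ZMod.castHom (pow_dvd_pow p (k + 1).le_succ) (ZMod (p ^ (k + 1))))).comp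
      (τ (k + 1)) = τ k) :
    ∃ σ : G →* GL ι ℤ_[p], ∀ k, (map (PadicInt.toZModPow (k + 1))).comp σ = τ k := by
  choose y hy using fun g i j => PadicInt.exists_toZModPow_succ_eq (fun k => τ k g i j)
    fun k => by rw [← hτ k, MonoidHom.comp_apply, GeneralLinearGroup.map_apply]
  have hred : ∀ k g, (of (y g)).map (PadicInt.toZModPow (k + 1)) = τ k g := fun k g => by
    ext i j
    exact hy g i j k
  have hext : ∀ A B : Matrix ι ι ℤ_[p],
      (∀ k, A.map (PadicInt.toZModPow (k + 1)) = B.map (PadicInt.toZModPow (k + 1))) → A = B :=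
    fun A B h => Matrix.ext fun i j => PadicInt.ext_of_toZModPow_succ fun k => by
      simpa using congrFun₂ (h k) i j
  let Φ : G →* Matrix ι ι ℤ_[p] :=
    { toFun g := of (y g)
      map_one' := hext _ _ fun k => by
        rw [hred, map_one, Units.val_one, Matrix.map_one _ (map_zero _) (map_one _)]
      map_mul' g h := hext _ _ fun k => by
        rw [Matrix.map_mul, hred, hred, hred, map_mul, Units.val_mul] }
  refine ⟨Φ.toHomUnits, fun k => ?_⟩
  ext g i j
  exact hy g i j k

end Matrix.GeneralLinearGroup

open Matrix.GeneralLinearGroup in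
theorem lift_prime_to_p_subgroup_of_GLn_general (p : ℕ) [Fact p.Prime]
    (n : ℕ) (G : Subgroup (GL (Fin n) (ZMod p)))
    (hcard : Nat.Coprime (Nat.card G) p) :
    ∃ σ : G →* GL (Fin n) ℤ_[p],
      ∀ x : G,
        Matrix.GeneralLinearGroup.map (PadicInt.toZMod : ℤ_[p] →+* ZMod p)
          (σ x) = (x : GL (Fin n) (ZMod p)) := by
  choose lift hlift using fun k {d} (hpd : p ∣ d) (hd : d ∣ p ^ (k + 1)) =>
    exists_lift_zmod_prime_pow (ι := Fin n) hcard hpd hd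
  let τ : ∀ k, G →* GL (Fin n) (ZMod (p ^ (k + 1))) := fun k =>
    Nat.rec (motive := fun k => G →* GL (Fin n) (ZMod (p ^ (k + 1))))
      (lift 0 dvd_rfl (dvd_pow_self p one_ne_zero) G.subtype)
      (fun k τk =>
        lift (k + 1) (dvd_pow_self p k.succ_ne_zero) (pow_dvd_pow p (k + 1).le_succ) τk)
      k
  obtain ⟨σ, hσ⟩ := exists_lift_padicInt_of_compatible τ fun k => hlift _ _ _ _
  refine ⟨σ, fun x => ?_⟩
  rw [← PadicInt.ringHom_eq_toZMod
      ((ZMod.castHom (dvd_pow_self p one_ne_zero) (ZMod p)).comp (PadicInt.toZModPow 1)),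
    map_comp, MonoidHom.comp_apply, ← MonoidHom.comp_apply _ σ, hσ 0]
  exact DFunLike.congr_fun (hlift 0 dvd_rfl _ G.subtype) x

/-- Let `p` be a prime, `n ≥ 1`, and let `𝒢 ⊆ GL_n(𝔽_p)` be a (finite)
subgroup whose order is coprime to `p`.  Then `𝒢` lifts to `GL_n(ℤ_p)`:
there is a group homomorphism `σ : 𝒢 → GL_n(ℤ_p)` whose composition with the
entrywise reduction map `GL_n(ℤ_p) → GL_n(𝔽_p)` is the inclusion of `𝒢`. -/
theorem lift_prime_to_p_subgroup_of_GLn (p : ℕ) [Fact p.Prime]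
    (n : ℕ) (hn : 1 ≤ n) (G : Subgroup (GL (Fin n) (ZMod p)))
    (hcard : Nat.Coprime (Nat.card G) p) :
    ∃ σ : G →* GL (Fin n) ℤ_[p],
      ∀ x : G,
        Matrix.GeneralLinearGroup.map (PadicInt.toZMod : ℤ_[p] →+* ZMod p)
          (σ x) = (x : GL (Fin n) (ZMod p)) :=
  lift_prime_to_p_subgroup_of_GLn_general p n G hcard
end
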